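/- arXiv:2508.20946 — 5 statements merged into one kernel-verified Lean document; each statement's English description precedes it below -/
import Mathlib

section
/- Let G be a finite simple graph. Then the total number of nonempty cliques of G (i.e., the number of complete subgraphs K_t over all t ≥ 1) satisfies ∑_{t ≥ 1} N(G,K_t) ≤ ∑_{v ∈ V(G)} (2^{d(v)+1} − 1)/(d(v)+1). -/
open SimpleGraph Finset

/-!
Give each nonempty clique `s` weight `1 / |s|` on each of its vertices, so that the number of
cliques is the total weight received by the vertices. A clique through `v` is `v ∪ T` with
`T ⊆ N(v)`, so with `d = deg v` the vertex `v` receives at most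
`∑_{T ⊆ N(v)} 1 / (|T| + 1) = ∑_j C(d, j) / (j + 1)`, and
`(d + 1) C(d, j) = (j + 1) C(d + 1, j + 1)` turns this into `(2 ^ (d + 1) - 1) / (d + 1)`.
-/

theorem Nat.sum_range_choose_div_add_one {K : Type*} [Field K] [CharZero K] (n : ℕ) :
    ∑ m ∈ range (n + 1), (n.choose m : K) / (m + 1) = (2 ^ (n + 1) - 1) / (n + 1) := by
  have choose_div (m : ℕ) : (n.choose m : K) / (m + 1) = (n + 1).choose (m + 1) / (n + 1) := by
    rw [div_eq_div_iff (Nat.cast_add_one_ne_zero m) (Nat.cast_add_one_ne_zero n)]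
    exact_mod_cast (mul_comm _ _).trans (Nat.add_one_mul_choose_eq n m)
  have sum_choose : ∑ m ∈ range (n + 1), ((n + 1).choose (m + 1) : K) = 2 ^ (n + 1) - 1 := by
    have := Nat.sum_range_choose (n + 1)
    rw [sum_range_succ', Nat.choose_zero_right] at this
    rw [eq_sub_iff_add_eq]
    exact_mod_cast this
  simp only [choose_div, ← sum_div, sum_choose]

theorem Finset.sum_powerset_one_div_card_add_one {K α : Type*} [Field K] [CharZero K]
    (A : Finset α) :
    ∑ T ∈ A.powerset, (1 : K) / (#T + 1) = (2 ^ (#A + 1) - 1) / (#A + 1) := by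
  simp only [sum_powerset_apply_card (fun m => (1 : K) / (m + 1)), nsmul_eq_mul, mul_one_div,
    Nat.sum_range_choose_div_add_one]

theorem Finset.card_eq_sum_sum_one_div_card {K α : Type*} [Field K] [CharZero K] [Fintype α]
    [DecidableEq α] (S : Finset (Finset α)) (hS : ∀ s ∈ S, s.Nonempty) :
    (#S : K) = ∑ v, ∑ s ∈ S with v ∈ s, (1 : K) / #s := by
  calc (#S : K) = ∑ s ∈ S, ∑ v ∈ s, (1 : K) / #s := by
        rw [card_eq_sum_ones, Nat.cast_sum]
        refine sum_congr rfl fun s hs => ?_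
        rw [sum_const, nsmul_eq_mul, mul_one_div_cancel (by simpa using (hS s hs).ne_empty)]
        simp
    _ = ∑ v, ∑ s ∈ S with v ∈ s, (1 : K) / #s := by
        simp_rw [sum_filter]
        rw [sum_comm]
        exact sum_congr rfl fun s _ => by rw [sum_ite_mem, univ_inter]

theorem SimpleGraph.sum_cliques_mem_one_div_card_le {K V : Type*} [Field K] [LinearOrder K]
    [IsStrictOrderedRing K] [Fintype V] [DecidableEq V] (G : SimpleGraph V) [DecidableRel G.Adj]
    (S : Finset (Finset V)) (hS : ∀ s ∈ S, G.IsClique (s : Set V)) (v : V) :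
    ∑ s ∈ S with v ∈ s, (1 : K) / #s ≤ ∑ T ∈ (G.neighborFinset v).powerset, (1 : K) / (#T + 1) := by
  have hsub : {s ∈ S | v ∈ s} ⊆ (G.neighborFinset v).powerset.image (insert v) := by
    intro s hs
    obtain ⟨hsS, hvs⟩ := mem_filter.1 hs
    refine mem_image.2 ⟨s.erase v, mem_powerset.2 fun u hu => ?_, insert_erase hvs⟩
    exact (G.mem_neighborFinset v u).2 <|
      hS s hsS hvs (mem_of_mem_erase hu) (ne_of_mem_erase hu).symm
  calc ∑ s ∈ S with v ∈ s, (1 : K) / #s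
      ≤ ∑ s ∈ (G.neighborFinset v).powerset.image (insert v), (1 : K) / #s :=
        sum_le_sum_of_subset_of_nonneg hsub fun _ _ _ => by positivity
    _ ≤ ∑ T ∈ (G.neighborFinset v).powerset, (1 : K) / #(insert v T) :=
        sum_image_le_of_nonneg fun _ _ => by positivity
    _ = ∑ T ∈ (G.neighborFinset v).powerset, (1 : K) / (#T + 1) := by
        refine sum_congr rfl fun T hT => ?_
        have hvT : v ∉ T := fun h => G.notMem_neighborFinset_self v (mem_powerset.1 hT h)
        rw [card_insert_of_notMem hvT, Nat.cast_succ]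

theorem stmt_2 {V : Type*} [Fintype V] [DecidableEq V] (G : SimpleGraph V)
    [DecidableRel G.Adj] :
    ((Set.ncard {s : Finset V | s.Nonempty ∧ G.IsClique ↑s} : ℕ) : ℚ) ≤
      ∑ v : V, ((2 ^ (G.degree v + 1) - 1 : ℚ) / (G.degree v + 1)) := by
  set S := ({s | s.Nonempty ∧ G.IsClique (s : Set V)} : Finset (Finset V))
  have hS : {s : Finset V | s.Nonempty ∧ G.IsClique ↑s} = ↑S := by ext; simp [S]
  rw [hS, Set.ncard_coe_finset, card_eq_sum_sum_one_div_card S fun s hs => (mem_filter.1 hs).2.1]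
  refine sum_le_sum fun v _ => ?_
  calc ∑ s ∈ S with v ∈ s, (1 : ℚ) / #s
      ≤ ∑ T ∈ (G.neighborFinset v).powerset, (1 : ℚ) / (#T + 1) :=
        G.sum_cliques_mem_one_div_card_le S (fun s hs => (mem_filter.1 hs).2.2) v
    _ = _ := by rw [sum_powerset_one_div_card_add_one, card_neighborFinset_eq_degree]
end

section
/- Let t ≥ 2 be an integer and let G be a finite simple graph. Then N(G,K_t) ≤ (1/C(t,2)) · ∑_{e ∈ E(G)} C(p(e)−1, t−2), where for each edge e, p(e) is the number of edges of a longest path of G containing the edge e. -/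
set_option linter.unusedSectionVars false
set_option maxHeartbeats 1000000

open SimpleGraph Finset

namespace LocalLuo

variable {V : Type*} {G : SimpleGraph V}

/-! ### getVert / support index lemmas -/

lemma support_getElem? {u v : V} (p : G.Walk u v) {i : ℕ} (hi : i ≤ p.length) :
    p.support[i]? = some (p.getVert i) := by
  induction p generalizing i with
  | nil =>
    simp only [Walk.length_nil, Nat.le_zero] at hi
    subst hi; rfl
  | cons h q ih =>
    cases i with
    | zero => simp [Walk.support_cons, Walk.getVert_zero]
    | succ n =>
      simp only [Walk.length_cons, Nat.add_le_add_iff_right] at hi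
      simpa [Walk.support_cons, Walk.getVert_cons_succ] using ih hi

lemma getVert_inj {u v : V} {p : G.Walk u v} (hp : p.IsPath) {i j : ℕ}
    (hi : i ≤ p.length) (hj : j ≤ p.length) (hij : p.getVert i = p.getVert j) : i = j := by
  have h1 := support_getElem? p hi
  have h2 := support_getElem? p hj
  rw [hij] at h1
  have hnd : p.support.Nodup := hp.support_nodup
  have hi' : i < p.support.length := by rw [Walk.length_support]; omega
  have hj' : j < p.support.length := by rw [Walk.length_support]; omega
  rw [List.getElem?_eq_getElem hi'] at h1
  rw [List.getElem?_eq_getElem hj'] at h2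
  have hget : p.support.get ⟨i, hi'⟩ = p.support.get ⟨j, hj'⟩ := by
    have := h1.trans h2.symm
    simpa using Option.some_inj.mp this
  have := List.nodup_iff_injective_get.mp hnd hget
  simpa using congrArg Fin.val this

lemma getVert_mem_support {u v : V} (p : G.Walk u v) {i : ℕ} (hi : i ≤ p.length) :
    p.getVert i ∈ p.support :=
  Walk.mem_support_iff_exists_getVert.mpr ⟨i, rfl, hi⟩

/-- position of a vertex on a walk -/
noncomputable def posW [DecidableEq V] {u v : V} (p : G.Walk u v) (x : V) : ℕ :=
  p.support.idxOf x

lemma posW_le [DecidableEq V] {u v : V} (p : G.Walk u v) {x : V} (hx : x ∈ p.support) :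
    posW p x ≤ p.length := by
  have h := List.idxOf_lt_length_iff.mpr hx
  rw [Walk.length_support] at h
  simpa [posW] using Nat.lt_succ_iff.mp h

lemma getVert_posW [DecidableEq V] {u v : V} (p : G.Walk u v) {x : V} (hx : x ∈ p.support) :
    p.getVert (posW p x) = x := by
  have h1 : p.support[posW p x]? = some (p.getVert (posW p x)) :=
    support_getElem? p (posW_le p hx)
  have hlt : List.idxOf x p.support < p.support.length := List.idxOf_lt_length_iff.mpr hx
  have h2 : p.support[posW p x]? = some x := by
    simp only [posW]
    rw [List.getElem?_eq_getElem hlt]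
    simp [List.getElem_idxOf hlt]
  rw [h1] at h2
  exact (Option.some_inj.mp h2)

lemma posW_getVert [DecidableEq V] {u v : V} {p : G.Walk u v} (hp : p.IsPath) {i : ℕ}
    (hi : i ≤ p.length) : posW p (p.getVert i) = i := by
  have hmem : p.getVert i ∈ p.support := getVert_mem_support p hi
  exact getVert_inj hp (posW_le p hmem) hi (getVert_posW p hmem)

lemma posW_zero [DecidableEq V] {u v : V} (p : G.Walk u v) : posW p u = 0 := by
  unfold posW
  rw [Walk.support_eq_cons]
  exact List.idxOf_cons_self

lemma posW_inj [DecidableEq V] {u v : V} {p : G.Walk u v} {x y : V}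
    (hx : x ∈ p.support) (hy : y ∈ p.support) (h : posW p x = posW p y) : x = y := by
  have := getVert_posW p hx
  rw [h, getVert_posW p hy] at this
  exact this.symm

lemma consec_edge_mem {u v : V} (p : G.Walk u v) {i : ℕ} (hi : i < p.length) :
    s(p.getVert i, p.getVert (i+1)) ∈ p.edges := by
  induction p generalizing i with
  | nil => simp at hi
  | cons h q ih =>
    cases i with
    | zero =>
      cases q with
      | nil => simp
      | cons h2 q2 => simp
    | succ n =>
      simp only [Walk.length_cons, Nat.add_lt_add_iff_right] at hi
      simp only [Walk.getVert_cons_succ, Walk.edges_cons]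
      right; exact ih hi


/-! ### path length suprema -/

def plSet (G : SimpleGraph V) (s : Finset V) (e : Sym2 V) : Set ℕ :=
  {n | ∃ (u v : V) (w : G.Walk u v), w.IsPath ∧ e ∈ w.edges ∧ (∀ x ∈ w.support, x ∈ s) ∧
    w.length = n}

def pathSet (G : SimpleGraph V) (s : Finset V) : Set ℕ :=
  {n | ∃ (u v : V) (w : G.Walk u v), w.IsPath ∧ (∀ x ∈ w.support, x ∈ s) ∧ w.length = n}

noncomputable def pl (G : SimpleGraph V) (s : Finset V) (e : Sym2 V) : ℕ := sSup (plSet G s e)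

noncomputable def lmax (G : SimpleGraph V) (s : Finset V) : ℕ := sSup (pathSet G s)

variable [Fintype V]

lemma bdd_plSet (G : SimpleGraph V) (s : Finset V) (e : Sym2 V) : BddAbove (plSet G s e) := by
  refine ⟨Fintype.card V, fun n hn => ?_⟩
  obtain ⟨u, v, w, hw, -, -, hl⟩ := hn
  exact hl ▸ hw.length_lt.le

lemma bdd_pathSet (G : SimpleGraph V) (s : Finset V) : BddAbove (pathSet G s) := by
  refine ⟨Fintype.card V, fun n hn => ?_⟩
  obtain ⟨u, v, w, hw, -, hl⟩ := hn
  exact hl ▸ hw.length_lt.le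

lemma le_pl {G : SimpleGraph V} {s : Finset V} {e : Sym2 V} {n : ℕ} (hn : n ∈ plSet G s e) :
    n ≤ pl G s e := le_csSup (bdd_plSet G s e) hn

lemma pl_mem {G : SimpleGraph V} {s : Finset V} {e : Sym2 V} (h : (plSet G s e).Nonempty) :
    pl G s e ∈ plSet G s e := Nat.sSup_mem h (bdd_plSet G s e)

lemma lmax_mem {G : SimpleGraph V} {s : Finset V} (h : (pathSet G s).Nonempty) :
    lmax G s ∈ pathSet G s := Nat.sSup_mem h (bdd_pathSet G s)

lemma le_lmax {G : SimpleGraph V} {s : Finset V} {n : ℕ} (hn : n ∈ pathSet G s) :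
    n ≤ lmax G s := le_csSup (bdd_pathSet G s) hn

lemma pl_le_lmax (G : SimpleGraph V) (s : Finset V) (e : Sym2 V) : pl G s e ≤ lmax G s := by
  rcases Set.eq_empty_or_nonempty (plSet G s e) with h | h
  · simp [pl, h]
  · obtain ⟨u, v, w, hw, -, hsub, hl⟩ := pl_mem h
    exact le_lmax ⟨u, v, w, hw, hsub, hl⟩

lemma pl_mono (G : SimpleGraph V) {s s' : Finset V} (hss : s ⊆ s') (e : Sym2 V) :
    pl G s e ≤ pl G s' e := by
  rcases Set.eq_empty_or_nonempty (plSet G s e) with h | h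
  · simp [pl, h]
  · obtain ⟨u, v, w, hw, he, hsub, hl⟩ := pl_mem h
    exact le_pl ⟨u, v, w, hw, he, fun x hx => hss (hsub x hx), hl⟩

/-! ### takeUntil index lemmas -/

lemma getVert_takeUntil [DecidableEq V] {u v x : V} {p : G.Walk u v} (hx : x ∈ p.support)
    {i : ℕ} (hi : i ≤ (p.takeUntil x hx).length) :
    (p.takeUntil x hx).getVert i = p.getVert i := by
  conv_rhs => rw [← p.take_spec hx]
  rw [Walk.getVert_append]
  split_ifs with h
  · rfl
  · have : i = (p.takeUntil x hx).length := by omega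
    subst this
    simp [Walk.getVert_length]

lemma length_takeUntil_of_getVert [DecidableEq V] {u v x : V} {p : G.Walk u v}
    (hp : p.IsPath) (hx : x ∈ p.support) {j : ℕ} (hj : j ≤ p.length)
    (hgv : p.getVert j = x) : (p.takeUntil x hx).length = j := by
  set k := (p.takeUntil x hx).length with hk
  have hkle : k ≤ p.length := p.length_takeUntil_le hx
  have h1 : p.getVert k = x := by
    rw [← getVert_takeUntil hx (le_refl k)]
    exact Walk.getVert_length _
  exact getVert_inj hp hkle hj (h1.trans hgv.symm)

/-! ### the rotation construction -/

lemma rot [DecidableEq V] {z v' : V} {W : G.Walk z v'} (hW : W.IsPath) {x : V}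
    (hx : x ∈ W.support) (hzx : G.Adj z x) :
    ∃ (a b : V) (F : G.Walk a b), F.IsPath ∧ s(z, x) ∈ F.edges ∧
      (∀ y ∈ F.support, y ∈ W.support) ∧ F.length = W.length := by
  have hspec := W.take_spec hx
  set T := W.takeUntil x hx with hTdef
  set D := W.dropUntil x hx with hDdef
  have hTpath : T.IsPath := hW.takeUntil hx
  have hDpath : D.IsPath := hW.dropUntil hx
  have hRnil : ¬ T.reverse.Nil := by
    rw [Walk.nil_iff_length_eq, Walk.length_reverse, ← Walk.nil_iff_length_eq]
    exact Walk.not_nil_of_ne hzx.ne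
  set Q := T.reverse.tail with hQdef
  have hQsup : T.reverse.support = x :: Q.support := by
    rw [hQdef, Walk.support_tail_of_not_nil _ hRnil, ← Walk.support_eq_cons]
  have hWsup : W.support = T.support ++ D.support.tail := by
    conv_lhs => rw [← hspec]
    rw [Walk.support_append]
  have hWnodup := hW.support_nodup
  rw [hWsup, List.nodup_append] at hWnodup
  obtain ⟨hTnodup, hDtailnodup, hdisj⟩ := hWnodup
  have hQnodupCons : (x :: Q.support).Nodup := by
    rw [← hQsup, Walk.support_reverse]
    exact List.nodup_reverse.mpr hTnodup
  have hQsub : ∀ y ∈ Q.support, y ∈ T.support ∧ y ≠ x := by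
    intro y hy
    constructor
    · have : y ∈ T.reverse.support := by rw [hQsup]; exact List.mem_cons_of_mem _ hy
      rwa [Walk.support_reverse, List.mem_reverse] at this
    · rintro rfl
      exact (List.nodup_cons.mp hQnodupCons).1 hy
  refine ⟨_, _, Q.append (Walk.cons hzx D), ?_, ?_, ?_, ?_⟩
  · rw [Walk.isPath_def, Walk.support_append, Walk.support_cons, List.tail_cons,
      List.nodup_append]
    refine ⟨(List.nodup_cons.mp hQnodupCons).2, hDpath.support_nodup, ?_⟩
    intro y hyQ w hyD hyw
    rw [← hyw] at hyD
    obtain ⟨hyT, hynx⟩ := hQsub y hyQ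
    rw [Walk.support_eq_cons D, List.mem_cons] at hyD
    rcases hyD with rfl | hyD
    · exact hynx rfl
    · exact hdisj _ hyT _ hyD rfl
  · rw [Walk.edges_append, Walk.edges_cons]
    exact List.mem_append_right _ List.mem_cons_self
  · intro y hy
    rw [Walk.mem_support_append_iff] at hy
    rcases hy with hy | hy
    · exact W.support_takeUntil_subset hx (hQsub y hy).1
    · rw [Walk.support_cons, List.mem_cons] at hy
      rcases hy with rfl | hy
      · exact W.start_mem_support
      · exact W.support_dropUntil_subset hx hy
  · have h1 : Q.length + 1 = T.length := by
      rw [hQdef]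
      have := Walk.length_tail_add_one hRnil
      rwa [Walk.length_reverse] at this
    have h2 : T.length + D.length = W.length := by
      conv_rhs => rw [← hspec]
      rw [Walk.length_append]
    rw [Walk.length_append, Walk.length_cons]
    omega

/-! ### the insertion construction -/

lemma edge_decomp {a b x y : V} (Q : G.Walk a b) (he : s(x, y) ∈ Q.edges) :
    ∃ (c d : V) (hcd : G.Adj c d) (Q₁ : G.Walk a c) (Q₂ : G.Walk d b),
      Q = Q₁.append (Walk.cons hcd Q₂) ∧ s(c, d) = s(x, y) := by
  induction Q with
  | nil => simp at he
  | @cons u w b h q ih =>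
    rw [Walk.edges_cons, List.mem_cons] at he
    rcases he with he | he
    · exact ⟨u, w, h, Walk.nil, q, by simp, he.symm⟩
    · obtain ⟨c, d, hcd, Q₁, Q₂, hq, hs⟩ := ih he
      exact ⟨c, d, hcd, Walk.cons h Q₁, Q₂, by rw [Walk.cons_append, hq], hs⟩

lemma insert_mid {a b x y z : V} {Q : G.Walk a b} (hQ : Q.IsPath)
    (he : s(x, y) ∈ Q.edges) (hz : z ∉ Q.support) (hzx : G.Adj z x) (hzy : G.Adj z y) :
    ∃ (F : G.Walk a b), F.IsPath ∧ s(z, x) ∈ F.edges ∧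
      (∀ u ∈ F.support, u ∈ Q.support ∨ u = z) ∧ F.length = Q.length + 1 := by
  obtain ⟨c, d, hcd, Q₁, Q₂, hq, hs⟩ := edge_decomp Q he
  have hzc : G.Adj z c ∧ G.Adj z d ∧ (s(z,x) = s(c,z) ∨ s(z,x) = s(z,d)) := by
    rcases Sym2.eq_iff.mp hs with ⟨rfl, rfl⟩ | ⟨rfl, rfl⟩
    · exact ⟨hzx, hzy, Or.inl (Sym2.eq_swap)⟩
    · exact ⟨hzy, hzx, Or.inr rfl⟩
  have hQsup : Q.support = Q₁.support ++ Q₂.support := by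
    rw [hq, Walk.support_append, Walk.support_cons, List.tail_cons]
  have hQnodup := hQ.support_nodup
  rw [hQsup, List.nodup_append] at hQnodup
  obtain ⟨h1nodup, h2nodup, hdisj⟩ := hQnodup
  have hz1 : z ∉ Q₁.support := fun h => hz (hQsup ▸ List.mem_append_left _ h)
  have hz2 : z ∉ Q₂.support := fun h => hz (hQsup ▸ List.mem_append_right _ h)
  refine ⟨Q₁.append (Walk.cons hzc.1.symm (Walk.cons hzc.2.1 Q₂)), ?_, ?_, ?_, ?_⟩
  · rw [Walk.isPath_def, Walk.support_append, Walk.support_cons, List.tail_cons,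
      Walk.support_cons, List.nodup_append]
    refine ⟨h1nodup, ?_, ?_⟩
    · rw [List.nodup_cons]
      exact ⟨hz2, h2nodup⟩
    · intro u hu1 w hu2 huw
      rw [← huw] at hu2
      rw [List.mem_cons] at hu2
      rcases hu2 with rfl | hu2
      · exact hz1 hu1
      · exact hdisj _ hu1 _ hu2 rfl
  · rw [Walk.edges_append, Walk.edges_cons, Walk.edges_cons]
    rcases hzc.2.2 with h | h
    · rw [h]
      exact List.mem_append_right _ List.mem_cons_self
    · rw [h]
      exact List.mem_append_right _ (List.mem_cons_of_mem _ List.mem_cons_self)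
  · intro u hu
    rw [Walk.mem_support_append_iff] at hu
    rcases hu with hu | hu
    · exact Or.inl (hQsup ▸ List.mem_append_left _ hu)
    · rw [Walk.support_cons, List.mem_cons] at hu
      rcases hu with rfl | hu
      · exact Or.inl (hQsup ▸ List.mem_append_left _ Q₁.end_mem_support)
      · rw [Walk.support_cons, List.mem_cons] at hu
        rcases hu with rfl | hu
        · exact Or.inr rfl
        · exact Or.inl (hQsup ▸ List.mem_append_right _ hu)
  · rw [Walk.length_append, Walk.length_cons, Walk.length_cons, hq, Walk.length_append,
      Walk.length_cons]
    omega


/-! ### the four-block construction -/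

lemma blocks [DecidableEq V] {z v' : V} {W : G.Walk z v'} (hW : W.IsPath) {i j : ℕ}
    (hij : i + 1 < j) (hj : j ≤ W.length) (hi0 : 0 < i)
    (hxy : G.Adj (W.getVert i) (W.getVert j))
    (hzm : G.Adj z (W.getVert (j - 1))) :
    ∃ (a b : V) (F : G.Walk a b), F.IsPath ∧ s(W.getVert i, W.getVert j) ∈ F.edges ∧
      (∀ u ∈ F.support, u ∈ W.support) ∧ F.length = W.length := by
  set x := W.getVert i with hxdef
  set y := W.getVert j with hydef
  have hy_mem : y ∈ W.support := getVert_mem_support W hj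
  have hspec := W.take_spec hy_mem
  set A := W.takeUntil y hy_mem with hAdef
  set D := W.dropUntil y hy_mem with hDdef
  have hApath : A.IsPath := hW.takeUntil hy_mem
  have hDpath : D.IsPath := hW.dropUntil hy_mem
  have hAlen : A.length = j := length_takeUntil_of_getVert hW hy_mem hj rfl
  have hzy : z ≠ y := by
    intro h
    have h0 : W.getVert 0 = W.getVert j := by rw [Walk.getVert_zero]; exact h
    have := getVert_inj hW (Nat.zero_le _) hj h0
    omega
  have hARnil : ¬ A.reverse.Nil := by
    rw [Walk.nil_iff_length_eq, Walk.length_reverse, ← Walk.nil_iff_length_eq]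
    exact Walk.not_nil_of_ne hzy
  set C := A.reverse.tail with hCdef
  have hCsupcons : A.reverse.support = y :: C.support := by
    rw [hCdef, Walk.support_tail_of_not_nil _ hARnil, ← Walk.support_eq_cons]
  have hCnodupCons : (y :: C.support).Nodup := by
    rw [← hCsupcons, Walk.support_reverse]
    exact List.nodup_reverse.mpr hApath.support_nodup
  have hCnodup : C.support.Nodup := (List.nodup_cons.mp hCnodupCons).2
  have hCpath : C.IsPath := Walk.isPath_def _ |>.mpr hCnodup
  have hCsub : ∀ u ∈ C.support, u ∈ A.support ∧ u ≠ y := by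
    intro u hu
    constructor
    · have : u ∈ A.reverse.support := by rw [hCsupcons]; exact List.mem_cons_of_mem _ hu
      rwa [Walk.support_reverse, List.mem_reverse] at this
    · rintro rfl
      exact (List.nodup_cons.mp hCnodupCons).1 hu
  -- C starts at W.getVert (j-1)
  have hCstart : A.reverse.getVert 1 = W.getVert (j - 1) := by
    rw [Walk.getVert_reverse, hAlen]
    exact getVert_takeUntil hy_mem (le_of_le_of_eq (by omega : j - 1 ≤ j) hAlen.symm)
  have hxA : A.getVert i = x := getVert_takeUntil hy_mem (le_of_le_of_eq (by omega : i ≤ j) hAlen.symm)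
  have hxA_mem : x ∈ A.support := Walk.mem_support_iff_exists_getVert.mpr ⟨i, hxA, by omega⟩
  have hxy_ne : x ≠ y := by
    intro h
    exact absurd (getVert_inj hW (by omega) hj h) (by omega)
  have hxC : x ∈ C.support := by
    have : x ∈ A.reverse.support := by rw [Walk.support_reverse, List.mem_reverse]; exact hxA_mem
    rw [hCsupcons, List.mem_cons] at this
    rcases this with h | h
    · exact absurd h hxy_ne
    · exact h
  have hCspec := C.take_spec hxC
  set C₁ := C.takeUntil x hxC with hC1def
  set C₂ := C.dropUntil x hxC with hC2def
  have hC1path : C₁.IsPath := hCpath.takeUntil hxC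
  have hC2path : C₂.IsPath := hCpath.dropUntil hxC
  have hmx : A.reverse.getVert 1 ≠ x := by
    rw [hCstart]
    intro h
    exact absurd (getVert_inj hW (by omega) (by omega) h) (by omega)
  have hC1Rnil : ¬ C₁.reverse.Nil := by
    rw [Walk.nil_iff_length_eq, Walk.length_reverse, ← Walk.nil_iff_length_eq]
    exact Walk.not_nil_of_ne hmx
  set B := C₁.reverse.tail with hBdef
  have hBsupcons : C₁.reverse.support = x :: B.support := by
    rw [hBdef, Walk.support_tail_of_not_nil _ hC1Rnil, ← Walk.support_eq_cons]
  have hBnodupCons : (x :: B.support).Nodup := by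
    rw [← hBsupcons, Walk.support_reverse]
    exact List.nodup_reverse.mpr hC1path.support_nodup
  have hBsub : ∀ u ∈ B.support, u ∈ C₁.support ∧ u ≠ x := by
    intro u hu
    constructor
    · have : u ∈ C₁.reverse.support := by rw [hBsupcons]; exact List.mem_cons_of_mem _ hu
      rwa [Walk.support_reverse, List.mem_reverse] at this
    · rintro rfl
      exact (List.nodup_cons.mp hBnodupCons).1 hu
  have hzm2 : G.Adj (A.reverse.getVert 1) z := by rw [hCstart]; exact hzm.symm
  -- decompositions of supports
  have hWsup : W.support = A.support ++ D.support.tail := by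
    conv_lhs => rw [← hspec]
    rw [Walk.support_append]
  have hWnodup := hW.support_nodup
  rw [hWsup, List.nodup_append] at hWnodup
  obtain ⟨hAnodup, hDtailnodup, hADdisj⟩ := hWnodup
  have hCsupsplit : C.support = C₁.support ++ C₂.support.tail := by
    conv_lhs => rw [← hCspec]
    rw [Walk.support_append]
  have hC12 : C.support.Nodup := hCnodup
  rw [hCsupsplit, List.nodup_append] at hC12
  obtain ⟨hC1nodup, hC2tailnodup, hC12disj⟩ := hC12
  have hC2sub : ∀ u ∈ C₂.support, u ∈ C.support := fun u hu => C.support_dropUntil_subset hxC hu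
  have hC1sub : ∀ u ∈ C₁.support, u ∈ C.support := fun u hu => C.support_takeUntil_subset hxC hu
  refine ⟨_, _, B.append (Walk.cons hzm2 (C₂.reverse.append (Walk.cons hxy D))), ?_, ?_, ?_, ?_⟩
  · -- IsPath
    rw [Walk.isPath_def, Walk.support_append, Walk.support_cons, List.tail_cons,
      Walk.support_append, Walk.support_cons, List.tail_cons, Walk.support_reverse]
    rw [List.nodup_append]
    refine ⟨(List.nodup_cons.mp hBnodupCons).2, ?_, ?_⟩
    · rw [List.nodup_append]
      refine ⟨List.nodup_reverse.mpr hC2path.support_nodup, hDpath.support_nodup, ?_⟩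
      · intro u hu2 w hud huw
        rw [← huw] at hud
        rw [List.mem_reverse] at hu2
        have huC := hC2sub u hu2
        have := hCsub u huC
        rw [Walk.support_eq_cons D, List.mem_cons] at hud
        rcases hud with rfl | hud
        · exact this.2 rfl
        · exact hADdisj _ this.1 _ hud rfl
    · intro u huB w huRest huw
      rw [← huw] at huRest
      obtain ⟨huC1, hunx⟩ := hBsub u huB
      rw [List.mem_append, List.mem_reverse] at huRest
      rcases huRest with hu2 | hud
      · rw [Walk.support_eq_cons C₂, List.mem_cons] at hu2
        rcases hu2 with rfl | hu2
        · exact hunx rfl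
        · exact hC12disj _ huC1 _ hu2 rfl
      · have := hCsub u (hC1sub u huC1)
        rw [Walk.support_eq_cons D, List.mem_cons] at hud
        rcases hud with rfl | hud
        · exact this.2 rfl
        · exact hADdisj _ this.1 _ hud rfl
  · -- edge membership
    rw [Walk.edges_append, Walk.edges_cons, Walk.edges_append, Walk.edges_cons]
    refine List.mem_append_right _ (List.mem_cons_of_mem _ (List.mem_append_right _ ?_))
    exact List.mem_cons_self
  · -- support subset
    intro u hu
    rw [Walk.mem_support_append_iff] at hu
    rcases hu with hu | hu
    · exact hWsup ▸ List.mem_append_left _ ((hCsub u (hC1sub u (hBsub u hu).1)).1)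
    · rw [Walk.support_cons, List.mem_cons] at hu
      rcases hu with rfl | hu
      · exact hWsup ▸ List.mem_append_left _
          ((hCsub _ (C.start_mem_support)).1)
      · rw [Walk.mem_support_append_iff] at hu
        rcases hu with hu | hu
        · rw [Walk.support_reverse, List.mem_reverse] at hu
          exact hWsup ▸ List.mem_append_left _ ((hCsub u (hC2sub u hu)).1)
        · rw [Walk.support_cons, List.mem_cons] at hu
          rcases hu with rfl | hu
          · exact hWsup ▸ List.mem_append_left _ hxA_mem
          · exact W.support_dropUntil_subset hy_mem hu
  · -- length
    have l1 : B.length + 1 = C₁.length := by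
      have := Walk.length_tail_add_one hC1Rnil
      rwa [Walk.length_reverse] at this
    have l2 : C₁.length + C₂.length = C.length := by
      conv_rhs => rw [← hCspec]
      rw [Walk.length_append]
    have l3 : C.length + 1 = A.length := by
      have := Walk.length_tail_add_one hARnil
      rwa [Walk.length_reverse] at this
    have l4 : A.length + D.length = W.length := by
      conv_rhs => rw [← hspec]
      rw [Walk.length_append]
    rw [Walk.length_append, Walk.length_cons, Walk.length_append, Walk.length_cons,
      Walk.length_reverse]
    omega


/-! ### counting step I1 : direct pairs + B pairs at a z-edge -/

lemma step_I1 [DecidableEq V] [DecidableRel G.Adj] {t ℓ : ℕ} {s : Finset V} {z v' x : V}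
    {W : G.Walk z v'}
    (hW : W.IsPath) (hWs : ∀ u ∈ W.support, u ∈ s) (hWl : W.length = ℓ)
    (hnb : ∀ u, G.Adj z u → u ∈ s → u ∈ W.support)
    (hx : x ∈ W.support) (hxz : x ≠ z)
    (KZ : Finset (Finset V))
    (hKZ : ∀ K ∈ KZ, G.IsNClique t K ∧ K ⊆ s ∧ z ∈ K)
    (BP : Finset ((_ : Finset V) × V × V))
    (hBP : ∀ q ∈ BP, q.1 ∈ KZ ∧ q.2.1 = x ∧ q.2.2 ∈ q.1 ∧ q.2.2 ≠ z ∧ x ∈ q.1 ∧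
      posW W x < posW W q.2.2 ∧ pl G s s(x, q.2.2) < ℓ) :
    (KZ.filter (fun K => x ∈ K)).card + BP.card ≤ (ℓ - 1).choose (t - 2) := by
  classical
  -- basic facts about cliques in KZ
  have hKmem : ∀ K ∈ KZ, ∀ u ∈ K, u ≠ z → G.Adj z u ∧ u ∈ W.support := by
    intro K hK u hu huz
    obtain ⟨hcl, hsub, hzK⟩ := hKZ K hK
    have hadj : G.Adj z u := hcl.1 (by exact_mod_cast hzK) (by exact_mod_cast hu) (Ne.symm huz)
    exact ⟨hadj, hnb u hadj (hsub hu)⟩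
  have hKadj : ∀ K ∈ KZ, ∀ a ∈ K, ∀ b ∈ K, a ≠ b → G.Adj a b := by
    intro K hK a ha b hb hab
    exact (hKZ K hK).1.1 (by exact_mod_cast ha) (by exact_mod_cast hb) hab
  set Tx : Finset V := (W.support.toFinset.erase z).erase x with hTxdef
  have hTxcard : Tx.card = ℓ - 1 := by
    have h1 : W.support.toFinset.card = ℓ + 1 := by
      rw [List.toFinset_card_of_nodup hW.support_nodup, Walk.length_support, hWl]
    have hz_mem : z ∈ W.support.toFinset := List.mem_toFinset.mpr W.start_mem_support
    have hx_mem : x ∈ W.support.toFinset.erase z :=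
      Finset.mem_erase.mpr ⟨hxz, List.mem_toFinset.mpr hx⟩
    rw [hTxdef, Finset.card_erase_of_mem hx_mem, Finset.card_erase_of_mem hz_mem, h1]
    omega
  -- facts about B-pair elements
  have hBfacts : ∀ q ∈ BP, q.2.1 = x ∧
      (¬ G.Adj z (W.getVert (posW W q.2.2 - 1)) ∧
       W.getVert (posW W q.2.2 - 1) ∈ W.support ∧
       W.getVert (posW W q.2.2 - 1) ≠ z ∧
       W.getVert (posW W q.2.2 - 1) ≠ x ∧
       W.getVert (posW W q.2.2 - 1) ≠ q.2.2 ∧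
       W.getVert (posW W q.2.2 - 1) ∉ q.1) := by
    intro q hq
    obtain ⟨hqK, hq1, hyK, hyz, hxK, hpos, hpl⟩ := hBP q hq
    set y := q.2.2 with hydef
    have hy_supp : y ∈ W.support := (hKmem q.1 hqK y hyK hyz).2
    have hx_pos : W.getVert (posW W x) = x := getVert_posW W hx
    have hy_pos : W.getVert (posW W y) = y := getVert_posW W hy_supp
    have hix : posW W x ≤ W.length := posW_le W hx
    have hjy : posW W y ≤ W.length := posW_le W hy_supp
    have hx0 : 0 < posW W x := by
      rcases Nat.eq_zero_or_pos (posW W x) with h | h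
      · exfalso; apply hxz
        rw [← hx_pos, h, Walk.getVert_zero]
      · exact h
    have hxy_ne : x ≠ y := by
      intro h
      have hgv : W.getVert (posW W x) = W.getVert (posW W y) := by rw [hx_pos, hy_pos, h]
      exact absurd (getVert_inj hW hix hjy hgv) (Nat.ne_of_lt hpos)
    have hadjxy : G.Adj x y := hKadj q.1 hqK x hxK y hyK hxy_ne
    -- not consecutive
    have hnotconsec : posW W y ≠ posW W x + 1 := by
      intro hcons
      have hedge : s(x, y) ∈ W.edges := by
        have := consec_edge_mem W (i := posW W x) (by omega)
        rwa [hx_pos, ← hcons, hy_pos] at this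
      have : ℓ ≤ pl G s s(x,y) :=
        le_pl ⟨z, v', W, hW, hedge, hWs, hWl⟩
      omega
    have hgap : posW W x + 1 < posW W y := by
      have := hpos; omega
    -- the marker
    have hm_nadj : ¬ G.Adj z (W.getVert (posW W y - 1)) := by
      intro hzm
      obtain ⟨a, b, F, hFp, hFe, hFs, hFl⟩ := blocks hW hgap hjy hx0
        (by rw [hx_pos, hy_pos]; exact hadjxy) hzm
      have : ℓ ≤ pl G s s(x, y) := by
        refine le_pl ⟨a, b, F, hFp, ?_, fun u hu => hWs u (hFs u hu), by rw [hFl, hWl]⟩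
        rwa [hx_pos, hy_pos] at hFe
      omega
    have hm_supp : W.getVert (posW W y - 1) ∈ W.support :=
      getVert_mem_support W (by omega)
    have hm_ne_z : W.getVert (posW W y - 1) ≠ z := by
      intro h
      have h0 : W.getVert (posW W y - 1) = W.getVert 0 := by rw [h, Walk.getVert_zero]
      have := getVert_inj hW (i := posW W y - 1) (j := 0) (by omega) (by omega) h0
      omega
    have hm_ne_x : W.getVert (posW W y - 1) ≠ x := by
      intro h
      have h2 : W.getVert (posW W y - 1) = W.getVert (posW W x) := h.trans hx_pos.symm
      have := getVert_inj hW (i := posW W y - 1) (j := posW W x) (by omega) hix h2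
      omega
    have hm_ne_y : W.getVert (posW W y - 1) ≠ y := by
      intro h
      have h2 : W.getVert (posW W y - 1) = W.getVert (posW W y) := h.trans hy_pos.symm
      have := getVert_inj hW (i := posW W y - 1) (j := posW W y) (by omega) hjy h2
      omega
    have hm_nmem : W.getVert (posW W y - 1) ∉ q.1 := by
      intro h
      exact hm_nadj (hKmem q.1 hqK _ h hm_ne_z).1
    exact ⟨hq1, hm_nadj, hm_supp, hm_ne_z, hm_ne_x, hm_ne_y, hm_nmem⟩
  -- the two image families
  set fD : Finset V → Finset V := fun K => (K.erase z).erase x with hfDdef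
  set fB : ((_ : Finset V) × V × V) → Finset V :=
    fun q => insert (W.getVert (posW W q.2.2 - 1)) (((q.1.erase z).erase x).erase q.2.2)
    with hfBdef
  have hDsub : ∀ K ∈ KZ.filter (fun K => x ∈ K), fD K ∈ Finset.powersetCard (t-2) Tx := by
    intro K hK
    rw [Finset.mem_filter] at hK
    obtain ⟨hKZ', hxK⟩ := hK
    rw [Finset.mem_powersetCard]
    constructor
    · intro u hu
      rw [hfDdef] at hu
      simp only [Finset.mem_erase] at hu
      obtain ⟨hux, huz, huK⟩ := hu
      exact Finset.mem_erase.mpr ⟨hux, Finset.mem_erase.mpr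
        ⟨huz, List.mem_toFinset.mpr (hKmem K hKZ' u huK huz).2⟩⟩
    · rw [hfDdef]
      have hzK : z ∈ K := (hKZ K hKZ').2.2
      have hcardK : K.card = t := (hKZ K hKZ').1.2
      rw [Finset.card_erase_of_mem (Finset.mem_erase.mpr ⟨hxz, hxK⟩),
        Finset.card_erase_of_mem hzK, hcardK]
      omega
  have hDinj : Set.InjOn fD (KZ.filter (fun K => x ∈ K)) := by
    intro K hK K' hK' heq
    rw [Finset.coe_filter, Set.mem_setOf_eq] at hK hK'
    have h1 : K = insert z (insert x (fD K)) := by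
      rw [hfDdef]
      rw [Finset.insert_erase (Finset.mem_erase.mpr ⟨hxz, hK.2⟩),
        Finset.insert_erase ((hKZ K hK.1).2.2)]
    have h2 : K' = insert z (insert x (fD K')) := by
      rw [hfDdef]
      rw [Finset.insert_erase (Finset.mem_erase.mpr ⟨hxz, hK'.2⟩),
        Finset.insert_erase ((hKZ K' hK'.1).2.2)]
    rw [h1, h2, heq]
  have hBsub : ∀ q ∈ BP, fB q ∈ Finset.powersetCard (t-2) Tx := by
    intro q hq
    obtain ⟨hqK, hq1, hyK, hyz, hxK, hpos, hpl⟩ := hBP q hq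
    obtain ⟨-, hm_nadj, hm_supp, hm_ne_z, hm_ne_x, hm_ne_y, hm_nmem⟩ := hBfacts q hq
    rw [Finset.mem_powersetCard]
    constructor
    · intro u hu
      rw [hfBdef] at hu
      simp only [Finset.mem_insert, Finset.mem_erase] at hu
      rcases hu with rfl | ⟨huy, hux, huz, huK⟩
      · exact Finset.mem_erase.mpr ⟨hm_ne_x, Finset.mem_erase.mpr
          ⟨hm_ne_z, List.mem_toFinset.mpr hm_supp⟩⟩
      · exact Finset.mem_erase.mpr ⟨hux, Finset.mem_erase.mpr
          ⟨huz, List.mem_toFinset.mpr (hKmem q.1 hqK u huK huz).2⟩⟩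
    · rw [hfBdef]
      have hxy_ne : x ≠ q.2.2 := by
        intro h
        rw [← h] at hpos
        omega
      have hzK : z ∈ q.1 := (hKZ q.1 hqK).2.2
      have hcardK : q.1.card = t := (hKZ q.1 hqK).1.2
      have h3le : 3 ≤ t := by
        have hsub : {z, x, q.2.2} ⊆ q.1 := by
          intro u hu
          simp only [Finset.mem_insert, Finset.mem_singleton] at hu
          rcases hu with rfl | rfl | rfl
          · exact hzK
          · exact hxK
          · exact hyK
        have hc3 : ({z, x, q.2.2} : Finset V).card = 3 := by
          rw [Finset.card_insert_of_notMem, Finset.card_insert_of_notMem,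
            Finset.card_singleton]
          · simp only [Finset.mem_singleton]; exact hxy_ne
          · simp only [Finset.mem_insert, Finset.mem_singleton]
            push_neg
            exact ⟨Ne.symm hxz, Ne.symm hyz⟩
        calc 3 = ({z, x, q.2.2} : Finset V).card := hc3.symm
        _ ≤ q.1.card := Finset.card_le_card hsub
        _ = t := hcardK
      have hmnotin : W.getVert (posW W q.2.2 - 1) ∉ ((q.1.erase z).erase x).erase q.2.2 := by
        intro h
        exact hm_nmem (Finset.mem_of_mem_erase (Finset.mem_of_mem_erase
          (Finset.mem_of_mem_erase h)))
      rw [Finset.card_insert_of_notMem hmnotin,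
        Finset.card_erase_of_mem (Finset.mem_erase.mpr ⟨Ne.symm hxy_ne,
          Finset.mem_erase.mpr ⟨hyz, hyK⟩⟩),
        Finset.card_erase_of_mem (Finset.mem_erase.mpr ⟨hxz, hxK⟩),
        Finset.card_erase_of_mem hzK, hcardK]
      omega
  have hBinj : Set.InjOn fB BP := by
    intro q hq q' hq' heq
    obtain ⟨hqK, hq1, hyK, hyz, hxK, hpos, hpl⟩ := hBP q (by exact_mod_cast hq)
    obtain ⟨hqK', hq1', hyK', hyz', hxK', hpos', hpl'⟩ := hBP q' (by exact_mod_cast hq')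
    obtain ⟨-, hm_nadj, hm_supp, hm_ne_z, hm_ne_x, hm_ne_y, hm_nmem⟩ :=
      hBfacts q (by exact_mod_cast hq)
    obtain ⟨-, hm_nadj', hm_supp', hm_ne_z', hm_ne_x', hm_ne_y', hm_nmem'⟩ :=
      hBfacts q' (by exact_mod_cast hq')
    set m := W.getVert (posW W q.2.2 - 1) with hmdef
    set m' := W.getVert (posW W q'.2.2 - 1) with hmdef'
    have hy_supp : q.2.2 ∈ W.support := (hKmem q.1 hqK _ hyK hyz).2
    have hy_supp' : q'.2.2 ∈ W.support := (hKmem q'.1 hqK' _ hyK' hyz').2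
    -- the markers agree
    have hmm : m = m' := by
      have hm'in : m' ∈ fB q := by
        rw [heq, hfBdef]
        exact Finset.mem_insert_self _ _
      rw [hfBdef] at hm'in
      simp only [Finset.mem_insert, Finset.mem_erase] at hm'in
      rcases hm'in with h | ⟨-, -, hmz', hmK⟩
      · exact h.symm
      · exact absurd (hKmem q.1 hqK m' hmK hm_ne_z').1 hm_nadj'
    have hyy : q.2.2 = q'.2.2 := by
      have hjy : posW W q.2.2 ≤ W.length := posW_le W hy_supp
      have hjy' : posW W q'.2.2 ≤ W.length := posW_le W hy_supp'
      have hpos1 : 0 < posW W q.2.2 := by omega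
      have hpos1' : 0 < posW W q'.2.2 := by omega
      have := getVert_inj hW (i := posW W q.2.2 - 1) (j := posW W q'.2.2 - 1)
        (by omega) (by omega) (by rw [← hmdef, ← hmdef', hmm])
      have hj_eq : posW W q.2.2 = posW W q'.2.2 := by omega
      rw [← getVert_posW W hy_supp, ← getVert_posW W hy_supp', hj_eq]
    -- recover the rest
    have hrest : ((q.1.erase z).erase x).erase q.2.2 = ((q'.1.erase z).erase x).erase q'.2.2 := by
      have h1 : (fB q).erase m = ((q.1.erase z).erase x).erase q.2.2 := by
        rw [hfBdef]
        apply Finset.erase_insert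
        intro h
        exact hm_nmem (Finset.mem_of_mem_erase (Finset.mem_of_mem_erase
          (Finset.mem_of_mem_erase h)))
      have h2 : (fB q').erase m' = ((q'.1.erase z).erase x).erase q'.2.2 := by
        rw [hfBdef]
        apply Finset.erase_insert
        intro h
        exact hm_nmem' (Finset.mem_of_mem_erase (Finset.mem_of_mem_erase
          (Finset.mem_of_mem_erase h)))
      rw [← h1, ← h2, heq, hmm]
    have hxy_ne : x ≠ q.2.2 := by
      intro h; rw [← h] at hpos; omega
    have hxy_ne' : x ≠ q'.2.2 := by
      intro h; rw [← h] at hpos'; omega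
    have hKeq : q.1 = q'.1 := by
      have e1 : q.1 = insert z (insert x (insert q.2.2 (((q.1.erase z).erase x).erase q.2.2))) := by
        rw [Finset.insert_erase (Finset.mem_erase.mpr ⟨Ne.symm hxy_ne,
          Finset.mem_erase.mpr ⟨hyz, hyK⟩⟩),
          Finset.insert_erase (Finset.mem_erase.mpr ⟨hxz, hxK⟩),
          Finset.insert_erase ((hKZ q.1 hqK).2.2)]
      have e2 : q'.1 = insert z (insert x (insert q'.2.2
          (((q'.1.erase z).erase x).erase q'.2.2))) := by
        rw [Finset.insert_erase (Finset.mem_erase.mpr ⟨Ne.symm hxy_ne',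
          Finset.mem_erase.mpr ⟨hyz', hyK'⟩⟩),
          Finset.insert_erase (Finset.mem_erase.mpr ⟨hxz, hxK'⟩),
          Finset.insert_erase ((hKZ q'.1 hqK').2.2)]
      rw [e1, e2, hrest, hyy]
    -- conclude
    obtain ⟨K1, y1, y2⟩ := q
    obtain ⟨K1', y1', y2'⟩ := q'
    simp only at hKeq hyy hq1 hq1'
    subst hKeq
    simp only [Sigma.mk.inj_iff, heq_eq_eq, Prod.mk.injEq, true_and]
    exact ⟨hq1.trans hq1'.symm, hyy⟩
  -- disjointness of images
  have hdisj : Disjoint ((KZ.filter (fun K => x ∈ K)).image fD) (BP.image fB) := by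
    rw [Finset.disjoint_left]
    intro S hSD hSB
    rw [Finset.mem_image] at hSD hSB
    obtain ⟨K, hK, rfl⟩ := hSD
    obtain ⟨q, hq, hfq⟩ := hSB
    rw [Finset.mem_filter] at hK
    obtain ⟨-, hm_nadj, -, hm_ne_z, -, -, -⟩ := hBfacts q hq
    have hmem : W.getVert (posW W q.2.2 - 1) ∈ fD K := by
      rw [← hfq, hfBdef]
      exact Finset.mem_insert_self _ _
    rw [hfDdef] at hmem
    simp only [Finset.mem_erase] at hmem
    exact hm_nadj (hKmem K hK.1 _ hmem.2.2 hmem.2.1).1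
  -- put it together
  calc (KZ.filter (fun K => x ∈ K)).card + BP.card
      = ((KZ.filter (fun K => x ∈ K)).image fD).card + (BP.image fB).card := by
        rw [Finset.card_image_of_injOn hDinj, Finset.card_image_of_injOn hBinj]
    _ = (((KZ.filter (fun K => x ∈ K)).image fD) ∪ (BP.image fB)).card :=
        (Finset.card_union_of_disjoint hdisj).symm
    _ ≤ (Finset.powersetCard (t-2) Tx).card := by
        apply Finset.card_le_card
        intro S hS
        rw [Finset.mem_union] at hS
        rcases hS with hS | hS
        · rw [Finset.mem_image] at hS
          obtain ⟨K, hK, rfl⟩ := hS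
          exact hDsub K hK
        · rw [Finset.mem_image] at hS
          obtain ⟨q, hq, rfl⟩ := hS
          exact hBsub q hq
    _ = (ℓ - 1).choose (t - 2) := by rw [Finset.card_powersetCard, hTxcard]


lemma sym2_rep (e : Sym2 V) : ∃ a b : V, e = s(a, b) := by
  induction e using Sym2.ind with
  | _ a b => exact ⟨a, b, rfl⟩

/-! ### counting step I2 : capacities of non-z edges -/

lemma step_I2 [DecidableEq V] [DecidableRel G.Adj] {t ℓ : ℕ} {s : Finset V} {z v' : V}
    {W : G.Walk z v'}
    (hW : W.IsPath) (hWs : ∀ u ∈ W.support, u ∈ s) (hWl : W.length = ℓ)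
    (hnb : ∀ u, G.Adj z u → u ∈ s → u ∈ W.support)
    (hmax : ∀ e, pl G s e ≤ ℓ)
    (KZ : Finset (Finset V))
    (hKZ : ∀ K ∈ KZ, G.IsNClique t K ∧ K ⊆ s ∧ z ∈ K)
    {e : Sym2 V} (he : e ∈ G.edgeFinset) (hes : ∀ u ∈ e, u ∈ s.erase z) :
    (pl G (s.erase z) e - 1).choose (t - 2) +
      (if ℓ ≤ pl G s e then (KZ.filter (fun K => ∀ u ∈ e, u ∈ K)).card else 0)
      ≤ (pl G s e - 1).choose (t - 2) := by
  classical
  have hmono : pl G (s.erase z) e ≤ pl G s e := pl_mono G (Finset.erase_subset z s) e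
  have hmono' : (pl G (s.erase z) e - 1).choose (t-2) ≤ (pl G s e - 1).choose (t-2) :=
    Nat.choose_le_choose _ (by omega)
  split_ifs with hif
  swap
  · simpa using hmono'
  rcases Finset.eq_empty_or_nonempty (KZ.filter (fun K => ∀ u ∈ e, u ∈ K)) with hemp | hne
  · rw [hemp]
    simpa using hmono'
  obtain ⟨K, hKf⟩ := hne
  rw [Finset.mem_filter] at hKf
  obtain ⟨hKKZ, heK⟩ := hKf
  obtain ⟨a, b, rfl⟩ := sym2_rep e
  obtain ⟨hcl, hKs, hzK⟩ := hKZ K hKKZ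
  have hadj : G.Adj a b := by rwa [mem_edgeFinset, mem_edgeSet] at he
  have haK : a ∈ K := heK a (Sym2.mem_mk_left a b)
  have hbK : b ∈ K := heK b (Sym2.mem_mk_right a b)
  have has' : a ∈ s.erase z := hes a (Sym2.mem_mk_left a b)
  have hbs' : b ∈ s.erase z := hes b (Sym2.mem_mk_right a b)
  have haz : a ≠ z := (Finset.mem_erase.mp has').1
  have hbz : b ≠ z := (Finset.mem_erase.mp hbs').1
  have has : a ∈ s := (Finset.mem_erase.mp has').2
  have hbs : b ∈ s := (Finset.mem_erase.mp hbs').2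
  have hza : G.Adj z a := hcl.1 (by exact_mod_cast hzK) (by exact_mod_cast haK) (Ne.symm haz)
  have hzb : G.Adj z b := hcl.1 (by exact_mod_cast hzK) (by exact_mod_cast hbK) (Ne.symm hbz)
  have hzs : z ∈ s := hWs z W.start_mem_support
  have hcardK : K.card = t := hcl.2
  have h3le : 3 ≤ t := by
    have hsub : {z, a, b} ⊆ K := by
      intro u hu
      simp only [Finset.mem_insert, Finset.mem_singleton] at hu
      rcases hu with rfl | rfl | rfl
      · exact hzK
      · exact haK
      · exact hbK
    have hc3 : ({z, a, b} : Finset V).card = 3 := by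
      rw [Finset.card_insert_of_notMem, Finset.card_insert_of_notMem, Finset.card_singleton]
      · simp only [Finset.mem_singleton]; exact hadj.ne
      · simp only [Finset.mem_insert, Finset.mem_singleton]
        push_neg
        exact ⟨Ne.symm haz, Ne.symm hbz⟩
    calc 3 = ({z, a, b} : Finset V).card := hc3.symm
    _ ≤ K.card := Finset.card_le_card hsub
    _ = t := hcardK
  -- bound on the number of cliques containing z,a,b
  have hACL : (KZ.filter (fun K => ∀ u ∈ s(a,b), u ∈ K)).card ≤ (ℓ - 2).choose (t - 3) := by
    have hTY : (((W.support.toFinset.erase z).erase a).erase b).card = ℓ - 2 := by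
      have h1 : W.support.toFinset.card = ℓ + 1 := by
        rw [List.toFinset_card_of_nodup hW.support_nodup, Walk.length_support, hWl]
      have hz_mem : z ∈ W.support.toFinset := List.mem_toFinset.mpr W.start_mem_support
      have ha_mem : a ∈ W.support.toFinset.erase z :=
        Finset.mem_erase.mpr ⟨haz, List.mem_toFinset.mpr (hnb a hza has)⟩
      have hb_mem : b ∈ (W.support.toFinset.erase z).erase a :=
        Finset.mem_erase.mpr ⟨hadj.ne', Finset.mem_erase.mpr
          ⟨hbz, List.mem_toFinset.mpr (hnb b hzb hbs)⟩⟩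
      rw [Finset.card_erase_of_mem hb_mem, Finset.card_erase_of_mem ha_mem,
        Finset.card_erase_of_mem hz_mem, h1]
      omega
    have := Finset.card_le_card_of_injOn
      (s := KZ.filter (fun K => ∀ u ∈ s(a,b), u ∈ K))
      (t := Finset.powersetCard (t-3) (((W.support.toFinset.erase z).erase a).erase b))
      (f := fun KK => ((KK.erase z).erase a).erase b) ?_ ?_
    · rw [Finset.card_powersetCard, hTY] at this
      exact this
    · intro K' hK'
      rw [Finset.mem_coe, Finset.mem_filter] at hK'
      obtain ⟨hK'KZ, heK'⟩ := hK'
      obtain ⟨hcl', hKs', hzK'⟩ := hKZ K' hK'KZ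
      have haK' : a ∈ K' := heK' a (Sym2.mem_mk_left a b)
      have hbK' : b ∈ K' := heK' b (Sym2.mem_mk_right a b)
      rw [Finset.mem_coe, Finset.mem_powersetCard]
      constructor
      · intro u hu
        simp only [Finset.mem_erase] at hu
        obtain ⟨hub, hua, huz, huK⟩ := hu
        have hzu : G.Adj z u := hcl'.1 (by exact_mod_cast hzK') (by exact_mod_cast huK)
          (Ne.symm huz)
        exact Finset.mem_erase.mpr ⟨hub, Finset.mem_erase.mpr ⟨hua,
          Finset.mem_erase.mpr ⟨huz, List.mem_toFinset.mpr (hnb u hzu (hKs' huK))⟩⟩⟩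
      · rw [Finset.card_erase_of_mem (Finset.mem_erase.mpr ⟨hadj.ne',
          Finset.mem_erase.mpr ⟨hbz, hbK'⟩⟩),
          Finset.card_erase_of_mem (Finset.mem_erase.mpr ⟨haz, haK'⟩),
          Finset.card_erase_of_mem hzK', hcl'.2]
        omega
    · intro K1 hK1 K2 hK2 heq12
      rw [Finset.coe_filter, Set.mem_setOf_eq] at hK1 hK2
      have m1 : ∀ KK, KK ∈ KZ → (∀ u ∈ s(a,b), u ∈ KK) →
          KK = insert z (insert a (insert b (((KK.erase z).erase a).erase b))) := by
        intro KK hKK hu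
        have hzKK : z ∈ KK := (hKZ KK hKK).2.2
        have haKK : a ∈ KK := hu a (Sym2.mem_mk_left a b)
        have hbKK : b ∈ KK := hu b (Sym2.mem_mk_right a b)
        rw [Finset.insert_erase (Finset.mem_erase.mpr ⟨hadj.ne',
          Finset.mem_erase.mpr ⟨hbz, hbKK⟩⟩),
          Finset.insert_erase (Finset.mem_erase.mpr ⟨haz, haKK⟩),
          Finset.insert_erase hzKK]
      simp only at heq12
      rw [m1 K1 hK1.1 hK1.2, m1 K2 hK2.1 hK2.2, heq12]
  -- the path-length drop
  have h1pl : 1 ≤ pl G (s.erase z) s(a,b) := by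
    refine le_pl ⟨a, b, Walk.cons hadj Walk.nil, ?_, ?_, ?_, rfl⟩
    · rw [Walk.isPath_def]
      simp [hadj.ne]
    · simp
    · intro u hu
      simp only [Walk.support_cons, Walk.support_nil, List.mem_cons, List.mem_singleton,
        List.not_mem_nil, or_false] at hu
      rcases hu with rfl | rfl
      · exact has'
      · exact hbs'
  obtain ⟨u2, v2, Q, hQp, hQe, hQs, hQl⟩ := pl_mem (s := s.erase z) (e := s(a,b))
    ⟨1, a, b, Walk.cons hadj Walk.nil, by rw [Walk.isPath_def]; simp [hadj.ne], by simp,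
      by intro u hu
         simp only [Walk.support_cons, Walk.support_nil, List.mem_cons, List.mem_singleton,
           List.not_mem_nil, or_false] at hu
         rcases hu with rfl | rfl
         · exact has'
         · exact hbs', rfl⟩
  have hzQ : z ∉ Q.support := fun h => (Finset.mem_erase.mp (hQs z h)).1 rfl
  obtain ⟨F, hFp, hFe, hFs, hFl⟩ := insert_mid hQp hQe hzQ hza hzb
  have hple : pl G (s.erase z) s(a,b) + 1 ≤ pl G s s(z,a) := by
    refine le_pl ⟨u2, v2, F, hFp, hFe, ?_, by rw [hFl, hQl]⟩
    intro u hu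
    rcases hFs u hu with h | rfl
    · exact (Finset.mem_erase.mp (hQs u h)).2
    · exact hzs
  have hlle : pl G (s.erase z) s(a,b) + 1 ≤ ℓ := le_trans hple (hmax _)
  -- final arithmetic
  have hstep1 : (pl G (s.erase z) s(a,b) - 1).choose (t-2) ≤ (ℓ - 2).choose (t-2) :=
    Nat.choose_le_choose _ (by omega)
  have hpascal : (ℓ - 2).choose (t-2) + (ℓ - 2).choose (t-3) = (ℓ - 1).choose (t-2) := by
    have e1 : ℓ - 1 = (ℓ - 2) + 1 := by omega
    have e2 : t - 2 = (t - 3) + 1 := by omega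
    rw [e1, e2, Nat.choose_succ_succ']
    omega
  have hfinal : (ℓ - 1).choose (t-2) ≤ (pl G s s(a,b) - 1).choose (t-2) :=
    Nat.choose_le_choose _ (by omega)
  calc (pl G (s.erase z) s(a,b) - 1).choose (t - 2)
        + (KZ.filter (fun K => ∀ u ∈ s(a,b), u ∈ K)).card
      ≤ (ℓ - 2).choose (t-2) + (ℓ - 2).choose (t-3) := Nat.add_le_add hstep1 hACL
    _ = (ℓ - 1).choose (t-2) := hpascal
    _ ≤ (pl G s s(a,b) - 1).choose (t-2) := hfinal


lemma card_ordered_pairs [DecidableEq V] {A : Finset V} (f : V → ℕ)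
    (hinj : ∀ a ∈ A, ∀ b ∈ A, f a = f b → a = b) :
    ((A ×ˢ A).filter (fun p => f p.1 < f p.2)).card = A.card.choose 2 := by
  rw [← Finset.card_powersetCard 2 A]
  apply Finset.card_bij (fun p _ => ({p.1, p.2} : Finset V))
  · intro p hp
    rw [Finset.mem_filter, Finset.mem_product] at hp
    rw [Finset.mem_powersetCard]
    constructor
    · intro u hu
      rcases Finset.mem_insert.mp hu with rfl | hu
      · exact hp.1.1
      · rw [Finset.mem_singleton] at hu; subst hu; exact hp.1.2
    · rw [Finset.card_insert_of_notMem, Finset.card_singleton]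
      rw [Finset.mem_singleton]
      intro h; rw [h] at hp; exact lt_irrefl _ hp.2
  · intro p hp p' hp' heq
    rw [Finset.mem_filter, Finset.mem_product] at hp hp'
    have h1 : p.1 ∈ ({p'.1, p'.2} : Finset V) := by rw [← heq]; simp
    have h2 : p.2 ∈ ({p'.1, p'.2} : Finset V) := by rw [← heq]; simp
    simp only [Finset.mem_insert, Finset.mem_singleton] at h1 h2
    have hne : p.1 ≠ p.2 := fun h => by rw [h] at hp; exact lt_irrefl _ hp.2
    have hne' : p'.1 ≠ p'.2 := fun h => by rw [h] at hp'; exact lt_irrefl _ hp'.2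
    rcases h1 with e1 | e1
    · rcases h2 with e2 | e2
      · exact absurd (e1.trans e2.symm) hne
      · exact Prod.ext_iff.mpr ⟨e1, e2⟩
    · rcases h2 with e2 | e2
      · exfalso
        have hlt := hp.2
        have hlt' := hp'.2
        rw [e1, e2] at hlt
        omega
      · exact absurd (e1.trans e2.symm) hne
  · intro S hS
    rw [Finset.mem_powersetCard] at hS
    obtain ⟨hSsub, hScard⟩ := hS
    obtain ⟨a, b, hab, rfl⟩ := Finset.card_eq_two.mp hScard
    have ha : a ∈ A := hSsub (by simp)
    have hb : b ∈ A := hSsub (by simp)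
    have hfne : f a ≠ f b := fun h => hab (hinj a ha b hb h)
    rcases lt_or_gt_of_ne hfne with h | h
    · exact ⟨(a, b), Finset.mem_filter.mpr ⟨Finset.mem_product.mpr ⟨ha, hb⟩, h⟩, rfl⟩
    · exact ⟨(b, a), Finset.mem_filter.mpr ⟨Finset.mem_product.mpr ⟨hb, ha⟩, h⟩,
        by simp [Finset.pair_comm]⟩

/-! ### the main induction -/

theorem key [DecidableEq V] [DecidableRel G.Adj] (t : ℕ) (ht : 2 ≤ t) (s : Finset V) :
    t.choose 2 * ((G.cliqueFinset t).filter (· ⊆ s)).card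
      ≤ ∑ e ∈ G.edgeFinset.filter (fun e => ∀ x ∈ e, x ∈ s),
          (pl G s e - 1).choose (t - 2) := by
  classical
  induction s using Finset.strongInduction with
  | _ s IH =>
  rcases Finset.eq_empty_or_nonempty ((G.cliqueFinset t).filter (· ⊆ s)) with hemp | hKne
  · rw [hemp]; simp
  obtain ⟨K₀, hK₀⟩ := hKne
  rw [Finset.mem_filter, mem_cliqueFinset_iff] at hK₀
  obtain ⟨⟨hK₀cl, hK₀card⟩, hK₀s⟩ := hK₀
  have h2card : 1 < K₀.card := by omega
  obtain ⟨a₀, ha₀, b₀, hb₀, hab₀⟩ := Finset.one_lt_card.mp h2card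
  have hadj₀ : G.Adj a₀ b₀ := hK₀cl (by exact_mod_cast ha₀) (by exact_mod_cast hb₀) hab₀
  have hwit : (1 : ℕ) ∈ pathSet G s := by
    refine ⟨a₀, b₀, Walk.cons hadj₀ Walk.nil, ?_, ?_, rfl⟩
    · rw [Walk.isPath_def]; simp [hadj₀.ne]
    · intro u hu
      simp only [Walk.support_cons, Walk.support_nil, List.mem_cons, List.mem_singleton,
        List.not_mem_nil, or_false] at hu
      rcases hu with rfl | rfl
      · exact hK₀s ha₀
      · exact hK₀s hb₀
  set ℓ := lmax G s with hldef
  obtain ⟨z, v', W, hWp, hWsub, hWlen⟩ := lmax_mem ⟨1, hwit⟩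
  have hℓ1 : 1 ≤ ℓ := le_lmax hwit
  have hzs : z ∈ s := hWsub z W.start_mem_support
  have hnb : ∀ u, G.Adj z u → u ∈ s → u ∈ W.support := by
    intro u hzu hus
    by_contra hu
    have hlong : W.length + 1 ≤ ℓ := by
      refine le_lmax ⟨u, v', Walk.cons hzu.symm W, (Walk.cons_isPath_iff _ _).mpr ⟨hWp, hu⟩,
        ?_, by simp⟩
      intro w hw
      rw [Walk.support_cons, List.mem_cons] at hw
      rcases hw with rfl | hw
      · exact hus
      · exact hWsub w hw
    omega
  have hmax : ∀ e, pl G s e ≤ ℓ := fun e => pl_le_lmax G s e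
  have hF2 : ∀ x, x ∈ s → G.Adj z x → ℓ ≤ pl G s s(z, x) := by
    intro x hxs hzx
    obtain ⟨aa, bb, F, hFp, hFe, hFs, hFl⟩ := rot hWp (hnb x hzx hxs) hzx
    exact le_pl ⟨aa, bb, F, hFp, hFe, fun u hu => hWsub u (hFs u hu), by rw [hFl, hWlen]⟩
  set KZ := ((G.cliqueFinset t).filter (· ⊆ s)).filter (fun K => z ∈ K) with hKZdef
  set NZ := s.filter (fun u => G.Adj z u) with hNZdef
  have hKZfacts : ∀ K ∈ KZ, G.IsNClique t K ∧ K ⊆ s ∧ z ∈ K := by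
    intro K hK
    rw [hKZdef, Finset.mem_filter, Finset.mem_filter, mem_cliqueFinset_iff] at hK
    exact ⟨hK.1.1, hK.1.2, hK.2⟩
  have hKmemNZ : ∀ K ∈ KZ, ∀ u ∈ K, u ≠ z → u ∈ NZ ∧ u ∈ W.support := by
    intro K hK u hu huz
    obtain ⟨hcl, hsub, hzK⟩ := hKZfacts K hK
    have hadj : G.Adj z u := hcl.1 (by exact_mod_cast hzK) (by exact_mod_cast hu) (Ne.symm huz)
    exact ⟨Finset.mem_filter.mpr ⟨hsub hu, hadj⟩, hnb u hadj (hsub hu)⟩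
  -- clique count split
  have hsplit : ((G.cliqueFinset t).filter (· ⊆ s)).card
      = KZ.card + ((G.cliqueFinset t).filter (· ⊆ s.erase z)).card := by
    have heq : ((G.cliqueFinset t).filter (· ⊆ s)).filter (fun K => ¬ z ∈ K)
        = (G.cliqueFinset t).filter (· ⊆ s.erase z) := by
      ext K
      simp only [Finset.mem_filter, Finset.subset_erase]
      tauto
    rw [← Finset.card_filter_add_card_filter_not
      (p := fun K => z ∈ K) (s := (G.cliqueFinset t).filter (· ⊆ s)), heq, ← hKZdef]
  -- the trips
  set TRIPS := KZ.sigma (fun K => ((K.erase z) ×ˢ (K.erase z)).filter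
      (fun p => posW W p.1 < posW W p.2)) with hTRIPSdef
  have hTRIPSmem : ∀ q ∈ TRIPS, q.1 ∈ KZ ∧ q.2.1 ∈ q.1.erase z ∧ q.2.2 ∈ q.1.erase z ∧
      posW W q.2.1 < posW W q.2.2 := by
    intro q hq
    rw [hTRIPSdef, Finset.mem_sigma] at hq
    obtain ⟨hq1, hq2⟩ := hq
    rw [Finset.mem_filter, Finset.mem_product] at hq2
    exact ⟨hq1, hq2.1.1, hq2.1.2, hq2.2⟩
  have hTRIPScard : TRIPS.card = KZ.card * ((t-1).choose 2) := by
    rw [hTRIPSdef, Finset.card_sigma]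
    rw [Finset.sum_congr rfl (g := fun _ => (t-1).choose 2) (fun K hK => ?_)]
    · rw [Finset.sum_const, smul_eq_mul]
    · obtain ⟨hcl, hsub, hzK⟩ := hKZfacts K hK
      have hposinj : ∀ a ∈ K.erase z, ∀ b ∈ K.erase z, posW W a = posW W b → a = b := by
        intro a ha b hb hfe
        have haS := (hKmemNZ K hK a (Finset.mem_of_mem_erase ha) (Finset.mem_erase.mp ha).1).2
        have hbS := (hKmemNZ K hK b (Finset.mem_of_mem_erase hb) (Finset.mem_erase.mp hb).1).2
        exact posW_inj haS hbS hfe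
      rw [card_ordered_pairs (posW W) hposinj, Finset.card_erase_of_mem hzK, hcl.2]
  set AT := TRIPS.filter (fun q => ℓ ≤ pl G s s(q.2.1, q.2.2)) with hATdef
  set BT := TRIPS.filter (fun q => ¬ ℓ ≤ pl G s s(q.2.1, q.2.2)) with hBTdef
  have hTsplit : TRIPS.card = AT.card + BT.card :=
    (Finset.card_filter_add_card_filter_not
      (s := TRIPS) (p := fun q => ℓ ≤ pl G s s(q.2.1, q.2.2))).symm
  -- A trips grouped by edge
  have hATcard : AT.card = ∑ e ∈ G.edgeFinset.filter (fun e => ∀ x ∈ e, x ∈ s.erase z),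
      (if ℓ ≤ pl G s e then (KZ.filter (fun K => ∀ u ∈ e, u ∈ K)).card else 0) := by
    have htarget : ∑ e ∈ G.edgeFinset.filter (fun e => ∀ x ∈ e, x ∈ s.erase z),
        (if ℓ ≤ pl G s e then (KZ.filter (fun K => ∀ u ∈ e, u ∈ K)).card else 0)
        = ((G.edgeFinset.filter (fun e => ∀ x ∈ e, x ∈ s.erase z)).sigma
            (fun e => if ℓ ≤ pl G s e then KZ.filter (fun K => ∀ u ∈ e, u ∈ K) else ∅)).card := by
      rw [Finset.card_sigma]
      refine Finset.sum_congr rfl (fun e he => ?_)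
      split_ifs with h
      · rfl
      · simp
    rw [htarget]
    apply Finset.card_bij (fun q (_ : q ∈ AT) => (⟨s(q.2.1, q.2.2), q.1⟩ : Σ _ : Sym2 V, Finset V))
    · intro q hq
      rw [hATdef, Finset.mem_filter] at hq
      obtain ⟨hqT, hqpl⟩ := hq
      obtain ⟨hqKZ, h1, h2, hpos⟩ := hTRIPSmem q hqT
      have hy1 := hKmemNZ q.1 hqKZ q.2.1 (Finset.mem_of_mem_erase h1) (Finset.mem_erase.mp h1).1
      have hy2 := hKmemNZ q.1 hqKZ q.2.2 (Finset.mem_of_mem_erase h2) (Finset.mem_erase.mp h2).1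
      have hne : q.2.1 ≠ q.2.2 := by
        intro h; rw [h] at hpos; exact lt_irrefl _ hpos
      obtain ⟨hcl, hsub, hzK⟩ := hKZfacts q.1 hqKZ
      have hadj : G.Adj q.2.1 q.2.2 := hcl.1 (by exact_mod_cast Finset.mem_of_mem_erase h1)
        (by exact_mod_cast Finset.mem_of_mem_erase h2) hne
      rw [Finset.mem_sigma]
      constructor
      · rw [Finset.mem_filter]
        constructor
        · rwa [mem_edgeFinset, mem_edgeSet]
        · intro u hu
          rw [Sym2.mem_iff] at hu
          rcases hu with rfl | rfl
          · exact Finset.mem_erase.mpr ⟨(Finset.mem_erase.mp h1).1,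
              hsub (Finset.mem_of_mem_erase h1)⟩
          · exact Finset.mem_erase.mpr ⟨(Finset.mem_erase.mp h2).1,
              hsub (Finset.mem_of_mem_erase h2)⟩
      · rw [if_pos hqpl, Finset.mem_filter]
        refine ⟨hqKZ, ?_⟩
        intro u hu
        rw [Sym2.mem_iff] at hu
        rcases hu with rfl | rfl
        · exact Finset.mem_of_mem_erase h1
        · exact Finset.mem_of_mem_erase h2
    · intro q hq q' hq' heq
      rw [hATdef, Finset.mem_filter] at hq hq'
      obtain ⟨hqT, -⟩ := hq
      obtain ⟨hqT', -⟩ := hq'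
      obtain ⟨hqKZ, h1, h2, hpos⟩ := hTRIPSmem q hqT
      obtain ⟨hqKZ', h1', h2', hpos'⟩ := hTRIPSmem q' hqT'
      rw [Sigma.mk.inj_iff] at heq
      obtain ⟨hee, hKK⟩ := heq
      rw [heq_eq_eq] at hKK
      rcases Sym2.eq_iff.mp hee with ⟨ha, hb⟩ | ⟨ha, hb⟩
      · exact Sigma.ext hKK (heq_of_eq (Prod.ext_iff.mpr ⟨ha, hb⟩))
      · exfalso
        rw [ha, hb] at hpos
        omega
    · intro q hq
      rw [Finset.mem_sigma] at hq
      obtain ⟨heE, hfib⟩ := hq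
      by_cases hcond : ℓ ≤ pl G s q.1
      swap
      · rw [if_neg hcond] at hfib; simp at hfib
      rw [if_pos hcond, Finset.mem_filter] at hfib
      obtain ⟨hKKZ, hsubK⟩ := hfib
      obtain ⟨a, b, hab⟩ := sym2_rep q.1
      rw [Finset.mem_filter] at heE
      have hadj : G.Adj a b := by
        have := heE.1
        rw [hab] at this
        rwa [mem_edgeFinset, mem_edgeSet] at this
      have haK : a ∈ q.2 := hsubK a (by rw [hab]; exact Sym2.mem_mk_left a b)
      have hbK : b ∈ q.2 := hsubK b (by rw [hab]; exact Sym2.mem_mk_right a b)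
      have haz : a ≠ z := by
        have := heE.2 a (by rw [hab]; exact Sym2.mem_mk_left a b)
        exact (Finset.mem_erase.mp this).1
      have hbz : b ≠ z := by
        have := heE.2 b (by rw [hab]; exact Sym2.mem_mk_right a b)
        exact (Finset.mem_erase.mp this).1
      have haE : a ∈ q.2.erase z := Finset.mem_erase.mpr ⟨haz, haK⟩
      have hbE : b ∈ q.2.erase z := Finset.mem_erase.mpr ⟨hbz, hbK⟩
      have haS := (hKmemNZ q.2 hKKZ a haK haz).2
      have hbS := (hKmemNZ q.2 hKKZ b hbK hbz).2
      have hposne : posW W a ≠ posW W b := by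
        intro h
        exact hadj.ne (posW_inj haS hbS h)
      rcases lt_or_gt_of_ne hposne with hlt | hgt
      · refine ⟨⟨q.2, (a, b)⟩, ?_, ?_⟩
        · rw [hATdef, Finset.mem_filter]
          constructor
          · rw [hTRIPSdef, Finset.mem_sigma]
            refine ⟨hKKZ, ?_⟩
            rw [Finset.mem_filter, Finset.mem_product]
            exact ⟨⟨haE, hbE⟩, hlt⟩
          · show ℓ ≤ pl G s s(a, b)
            rwa [← hab]
        · show (⟨s(a,b), q.2⟩ : Σ _ : Sym2 V, Finset V) = q
          obtain ⟨e1, K1⟩ := q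
          simp only at hab ⊢
          rw [hab]
      · refine ⟨⟨q.2, (b, a)⟩, ?_, ?_⟩
        · rw [hATdef, Finset.mem_filter]
          constructor
          · rw [hTRIPSdef, Finset.mem_sigma]
            refine ⟨hKKZ, ?_⟩
            rw [Finset.mem_filter, Finset.mem_product]
            exact ⟨⟨hbE, haE⟩, hgt⟩
          · show ℓ ≤ pl G s s(b, a)
            rw [Sym2.eq_swap]
            rwa [← hab]
        · show (⟨s(b,a), q.2⟩ : Σ _ : Sym2 V, Finset V) = q
          obtain ⟨e1, K1⟩ := q
          simp only at hab ⊢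
          rw [Sym2.eq_swap, hab]
  -- B trips grouped by first vertex
  have hBTcard : BT.card = ∑ x ∈ NZ, (BT.filter (fun q => q.2.1 = x)).card := by
    apply Finset.card_eq_sum_card_fiberwise
    intro q hq
    rw [Finset.mem_coe, hBTdef, Finset.mem_filter] at hq
    obtain ⟨hqT, -⟩ := hq
    obtain ⟨hqKZ, h1, -, -⟩ := hTRIPSmem q hqT
    exact (hKmemNZ q.1 hqKZ q.2.1 (Finset.mem_of_mem_erase h1) (Finset.mem_erase.mp h1).1).1
  -- direct pairs double count
  have hDsum : ∑ x ∈ NZ, (KZ.filter (fun K => x ∈ K)).card = KZ.card * (t-1) := by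
    have hcf : ∀ x ∈ NZ, (KZ.filter (fun K => x ∈ K)).card
        = ∑ K ∈ KZ, (if x ∈ K then 1 else 0) := by
      intro x hx
      rw [Finset.card_filter]
    rw [Finset.sum_congr rfl hcf, Finset.sum_comm]
    have hperK : ∀ K ∈ KZ, ∑ x ∈ NZ, (if x ∈ K then 1 else 0) = t - 1 := by
      intro K hK
      obtain ⟨hcl, hsub, hzK⟩ := hKZfacts K hK
      rw [← Finset.card_filter]
      have : NZ.filter (fun x => x ∈ K) = K.erase z := by
        ext u
        simp only [Finset.mem_filter, Finset.mem_erase, hNZdef]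
        constructor
        · rintro ⟨⟨hus, hzu⟩, huK⟩
          exact ⟨hzu.ne', huK⟩
        · rintro ⟨huz, huK⟩
          have hadj : G.Adj z u := hcl.1 (by exact_mod_cast hzK) (by exact_mod_cast huK)
            (Ne.symm huz)
          exact ⟨⟨hsub huK, hadj⟩, huK⟩
      rw [this, Finset.card_erase_of_mem hzK, hcl.2]
    rw [Finset.sum_congr rfl hperK, Finset.sum_const, smul_eq_mul]
  -- per-x bound
  have hI1 : ∀ x ∈ NZ, (KZ.filter (fun K => x ∈ K)).card
      + (BT.filter (fun q => q.2.1 = x)).card ≤ (pl G s s(z,x) - 1).choose (t - 2) := by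
    intro x hx
    rw [hNZdef, Finset.mem_filter] at hx
    obtain ⟨hxs, hzx⟩ := hx
    have hxsupp : x ∈ W.support := hnb x hzx hxs
    have hBP : ∀ q ∈ BT.filter (fun q => q.2.1 = x), q.1 ∈ KZ ∧ q.2.1 = x ∧ q.2.2 ∈ q.1 ∧
        q.2.2 ≠ z ∧ x ∈ q.1 ∧ posW W x < posW W q.2.2 ∧ pl G s s(x, q.2.2) < ℓ := by
      intro q hq
      rw [Finset.mem_filter] at hq
      obtain ⟨hqBT, hq1⟩ := hq
      rw [hBTdef, Finset.mem_filter] at hqBT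
      obtain ⟨hqT, hqpl⟩ := hqBT
      obtain ⟨hqKZ, h1, h2, hpos⟩ := hTRIPSmem q hqT
      refine ⟨hqKZ, hq1, Finset.mem_of_mem_erase h2, (Finset.mem_erase.mp h2).1, ?_, ?_, ?_⟩
      · rw [← hq1]; exact Finset.mem_of_mem_erase h1
      · rw [← hq1]; exact hpos
      · rw [← hq1]; omega
    have step := step_I1 hWp hWsub hWlen hnb hxsupp hzx.ne' KZ hKZfacts
      (BT.filter (fun q => q.2.1 = x)) hBP
    refine le_trans step (Nat.choose_le_choose _ ?_)
    have := hF2 x hxs hzx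
    omega
  -- per-edge bound for non-z edges
  have hI2 : ∀ e ∈ G.edgeFinset.filter (fun e => ∀ x ∈ e, x ∈ s.erase z),
      (pl G (s.erase z) e - 1).choose (t-2)
        + (if ℓ ≤ pl G s e then (KZ.filter (fun K => ∀ u ∈ e, u ∈ K)).card else 0)
      ≤ (pl G s e - 1).choose (t-2) := by
    intro e he
    rw [Finset.mem_filter] at he
    exact step_I2 hWp hWsub hWlen hnb hmax KZ hKZfacts he.1 he.2
  -- z-edge reindex
  have hzsum : ∑ x ∈ NZ, (pl G s s(z,x) - 1).choose (t-2)
      = ∑ e ∈ G.edgeFinset.filter (fun e => (∀ x ∈ e, x ∈ s) ∧ z ∈ e),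
          (pl G s e - 1).choose (t-2) := by
    apply Finset.sum_bij (fun x (_ : x ∈ NZ) => s(z, x))
    · intro x hx
      rw [hNZdef, Finset.mem_filter] at hx
      rw [Finset.mem_filter]
      refine ⟨?_, ?_, ?_⟩
      · rw [mem_edgeFinset, mem_edgeSet]; exact hx.2
      · intro u hu
        rw [Sym2.mem_iff] at hu
        rcases hu with rfl | rfl
        · exact hzs
        · exact hx.1
      · exact Sym2.mem_mk_left z x
    · intro x hx x' hx' heq
      rw [hNZdef, Finset.mem_filter] at hx hx'
      rcases Sym2.eq_iff.mp heq with ⟨-, h⟩ | ⟨h1, h2⟩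
      · exact h
      · exfalso
        exact hx.2.ne' h2
    · intro e he
      rw [Finset.mem_filter] at he
      obtain ⟨heE, hesub, hze⟩ := he
      obtain ⟨a, b, rfl⟩ := sym2_rep e
      have hadj : G.Adj a b := by rwa [mem_edgeFinset, mem_edgeSet] at heE
      rw [Sym2.mem_iff] at hze
      rcases hze with rfl | rfl
      · refine ⟨b, ?_, rfl⟩
        rw [hNZdef, Finset.mem_filter]
        exact ⟨hesub b (Sym2.mem_mk_right _ _), hadj⟩
      · refine ⟨a, ?_, ?_⟩
        · rw [hNZdef, Finset.mem_filter]
          exact ⟨hesub a (Sym2.mem_mk_left _ _), hadj.symm⟩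
        · exact Sym2.eq_swap
    · intro x hx
      rfl
  -- edge partition
  have hpart : ∑ e ∈ G.edgeFinset.filter (fun e => ∀ x ∈ e, x ∈ s),
        (pl G s e - 1).choose (t-2)
      = ∑ e ∈ G.edgeFinset.filter (fun e => (∀ x ∈ e, x ∈ s) ∧ z ∈ e),
          (pl G s e - 1).choose (t-2)
        + ∑ e ∈ G.edgeFinset.filter (fun e => ∀ x ∈ e, x ∈ s.erase z),
            (pl G s e - 1).choose (t-2) := by
    rw [← Finset.sum_filter_add_sum_filter_not
      (G.edgeFinset.filter (fun e => ∀ x ∈ e, x ∈ s)) (fun e => z ∈ e)]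
    congr 1
    · congr 1
      rw [Finset.filter_filter]
    · congr 1
      rw [Finset.filter_filter]
      ext e
      simp only [Finset.mem_filter, Finset.mem_erase]
      constructor
      · rintro ⟨heE, hsub, hze⟩
        refine ⟨heE, fun u hu => ⟨?_, hsub u hu⟩⟩
        rintro rfl
        exact hze hu
      · rintro ⟨heE, hsub⟩
        refine ⟨heE, fun u hu => (hsub u hu).2, fun hze => ?_⟩
        exact (hsub z hze).1 rfl
  -- induction hypothesis
  have hIH := IH (s.erase z) (Finset.erase_ssubset hzs)
  -- the choose identity
  have hchoose : t.choose 2 = (t-1) + (t-1).choose 2 := by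
    have e1 : t = (t-1) + 1 := by omega
    conv_lhs => rw [e1]
    rw [show (2 : ℕ) = 1 + 1 from rfl, Nat.choose_succ_succ', Nat.choose_one_right]
  -- final assembly
  calc t.choose 2 * ((G.cliqueFinset t).filter (· ⊆ s)).card
      = t.choose 2 * KZ.card
        + t.choose 2 * ((G.cliqueFinset t).filter (· ⊆ s.erase z)).card := by
        rw [hsplit]; ring
    _ = (KZ.card * (t-1) + (AT.card + BT.card))
        + t.choose 2 * ((G.cliqueFinset t).filter (· ⊆ s.erase z)).card := by
        rw [← hTsplit, hTRIPScard, hchoose]; ring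
    _ = (∑ x ∈ NZ, (KZ.filter (fun K => x ∈ K)).card
          + ∑ x ∈ NZ, (BT.filter (fun q => q.2.1 = x)).card)
        + (AT.card + t.choose 2 * ((G.cliqueFinset t).filter (· ⊆ s.erase z)).card) := by
        rw [hDsum, ← hBTcard]; ring
    _ ≤ (∑ x ∈ NZ, (KZ.filter (fun K => x ∈ K)).card
          + ∑ x ∈ NZ, (BT.filter (fun q => q.2.1 = x)).card)
        + (AT.card + ∑ e ∈ G.edgeFinset.filter (fun e => ∀ x ∈ e, x ∈ s.erase z),
            (pl G (s.erase z) e - 1).choose (t-2)) := by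
        exact Nat.add_le_add_left (Nat.add_le_add_left hIH _) _
    _ = ∑ x ∈ NZ, ((KZ.filter (fun K => x ∈ K)).card + (BT.filter (fun q => q.2.1 = x)).card)
        + ∑ e ∈ G.edgeFinset.filter (fun e => ∀ x ∈ e, x ∈ s.erase z),
            ((pl G (s.erase z) e - 1).choose (t-2)
              + (if ℓ ≤ pl G s e then (KZ.filter (fun K => ∀ u ∈ e, u ∈ K)).card else 0)) := by
        rw [hATcard, Finset.sum_add_distrib, Finset.sum_add_distrib]
        ring
    _ ≤ ∑ x ∈ NZ, (pl G s s(z,x) - 1).choose (t-2)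
        + ∑ e ∈ G.edgeFinset.filter (fun e => ∀ x ∈ e, x ∈ s.erase z),
            (pl G s e - 1).choose (t-2) := by
        exact Nat.add_le_add (Finset.sum_le_sum hI1) (Finset.sum_le_sum hI2)
    _ = ∑ e ∈ G.edgeFinset.filter (fun e => ∀ x ∈ e, x ∈ s),
          (pl G s e - 1).choose (t-2) := by
        rw [hzsum, ← hpart]

end LocalLuo

/-- Number of copies of the complete graph `K_t` in `G`. -/
noncomputable def cliqueCount {V : Type*} (G : SimpleGraph V) (t : ℕ) : ℕ :=
  Set.ncard {s : Finset V | G.IsNClique t s}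

/-- `maxPathLen G e` is the maximum length (number of edges) of a path in `G`
containing the edge `e`. -/
noncomputable def maxPathLen {V : Type*} (G : SimpleGraph V) (e : Sym2 V) : ℕ :=
  sSup {n : ℕ | ∃ (u v : V) (w : G.Walk u v), w.IsPath ∧ e ∈ w.edges ∧ w.length = n}

theorem stmt_3 {V : Type*} [Fintype V] [DecidableEq V] (G : SimpleGraph V)
    [DecidableRel G.Adj] (t : ℕ) (ht : 2 ≤ t) :
    (cliqueCount G t : ℚ) ≤
      (1 / (t.choose 2)) * ∑ e ∈ G.edgeFinset, ((maxPathLen G e - 1).choose (t - 2) : ℚ) := by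
  classical
  have hpl : ∀ e, LocalLuo.pl G Finset.univ e = maxPathLen G e := by
    intro e
    unfold LocalLuo.pl maxPathLen LocalLuo.plSet
    congr 1
    ext n
    constructor
    · rintro ⟨u, v, w, hw, he, -, hl⟩
      exact ⟨u, v, w, hw, he, hl⟩
    · rintro ⟨u, v, w, hw, he, hl⟩
      exact ⟨u, v, w, hw, he, fun x _ => Finset.mem_univ x, hl⟩
  have hcc : cliqueCount G t = (G.cliqueFinset t).card := by
    unfold cliqueCount
    rw [show {s : Finset V | G.IsNClique t s} = ↑(G.cliqueFinset t) by
      ext K; simp [mem_cliqueFinset_iff]]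
    exact Set.ncard_coe_finset _
  have hkey := LocalLuo.key (G := G) t ht Finset.univ
  rw [Finset.filter_true_of_mem (fun K _ => K.subset_univ)] at hkey
  rw [Finset.filter_true_of_mem (fun e _ => by intro x _; exact Finset.mem_univ x)] at hkey
  have hkey2 : t.choose 2 * cliqueCount G t
      ≤ ∑ e ∈ G.edgeFinset, (maxPathLen G e - 1).choose (t - 2) := by
    rw [hcc]
    calc t.choose 2 * (G.cliqueFinset t).card
        ≤ ∑ e ∈ G.edgeFinset, (LocalLuo.pl G Finset.univ e - 1).choose (t - 2) := hkey
      _ = ∑ e ∈ G.edgeFinset, (maxPathLen G e - 1).choose (t - 2) := by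
          refine Finset.sum_congr rfl (fun e _ => ?_)
          rw [hpl]
  have hpos : (0 : ℚ) < (t.choose 2 : ℚ) := by
    have : 0 < t.choose 2 := Nat.choose_pos ht
    exact_mod_cast this
  rw [one_div, inv_mul_eq_div, le_div_iff₀ hpos]
  have : ((t.choose 2 * cliqueCount G t : ℕ) : ℚ)
      ≤ ((∑ e ∈ G.edgeFinset, (maxPathLen G e - 1).choose (t - 2) : ℕ) : ℚ) := by
    exact_mod_cast hkey2
  push_cast at this
  linarith
end

section
/- Let t ≥ 2 be an integer, let G be a finite simple graph, and let x be a vertex of G with d(x) > 0 such that d(v) ≥ d(x) for every neighbor v of x. Then ∑_{v ∈ N(x)} ( (1/(t·d(v))) · C(d(v), t−1) − (1/d(v)) · C(d(v), t−1) ) + C(d(x), t−1) ≤ (1/t) · C(d(x), t−1). -/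
/-!
By `n * C(n - 1, t - 2) = (t - 1) * C(n, t - 1)`, the summand of a neighbour `v` equals
`-C(d(v) - 1, t - 2) / t`, which only decreases as `d(v)` grows. Since `d(v) ≥ d(x)`, the sum is at
most `-d(x) * C(d(x) - 1, t - 2) / t = -(t - 1) / t * C(d(x), t - 1)`, and adding `C(d(x), t - 1)`
gives exactly the right-hand side.
-/

open SimpleGraph Finset

theorem Nat.mul_choose_sub_one_eq (n k : ℕ) :
    n * (n - 1).choose k = n.choose (k + 1) * (k + 1) := by
  cases n with
  | zero => simp
  | succ n => exact Nat.add_one_mul_choose_eq n k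

theorem inv_mul_choose_sub_inv_mul_choose {K : Type*} [Field K] [CharZero K] {n t : ℕ}
    (hn : n ≠ 0) (ht : 2 ≤ t) :
    (1 / (t * n) : K) * (n.choose (t - 1) : K) - (1 / n : K) * (n.choose (t - 1) : K) =
      -((n - 1).choose (t - 2) : K) / t := by
  obtain ⟨k, rfl⟩ : ∃ k, t = k + 2 := ⟨t - 2, by omega⟩
  have hpascal : (n : K) * ((n - 1).choose k : K) = (n.choose (k + 1) : K) * (k + 1) := by
    exact_mod_cast Nat.mul_choose_sub_one_eq n k
  have hk : ((k + 2 : ℕ) : K) ≠ 0 := Nat.cast_ne_zero.2 (by omega)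
  simp only [Nat.add_sub_cancel, show k + 2 - 1 = k + 1 by omega]
  field_simp
  push_cast
  linear_combination hpascal

theorem stmt_10_general {V : Type*} [Fintype V] [DecidableEq V] (G : SimpleGraph V)
    [DecidableRel G.Adj] (t : ℕ) (ht : 2 ≤ t) (x : V)
    (hmin : ∀ v ∈ G.neighborFinset x, G.degree x ≤ G.degree v) :
    (∑ v ∈ G.neighborFinset x,
        ((1 / (t * G.degree v) : ℚ) * ((G.degree v).choose (t - 1) : ℚ) -
          (1 / (G.degree v) : ℚ) * ((G.degree v).choose (t - 1) : ℚ))) +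
        ((G.degree x).choose (t - 1) : ℚ) ≤
      (1 / t) * ((G.degree x).choose (t - 1) : ℚ) := by
  set d := G.degree x
  have ht0 : (t : ℚ) ≠ 0 := Nat.cast_ne_zero.2 (by omega)
  calc _ ≤ (∑ _v ∈ G.neighborFinset x, -((d - 1).choose (t - 2) : ℚ) / t) +
        (d.choose (t - 1) : ℚ) := by
        gcongr with v hv
        have hv0 : G.degree v ≠ 0 := (G.degree_pos_iff_exists_adj v).2
          ⟨x, (G.mem_neighborFinset x v).1 hv |>.symm⟩ |>.ne'
        rw [inv_mul_choose_sub_inv_mul_choose hv0 ht]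
        gcongr
        exact hmin v hv
    _ = (1 / t) * (d.choose (t - 1) : ℚ) := by
        have hpascal : (d : ℚ) * ((d - 1).choose (t - 2) : ℚ) =
            (d.choose (t - 1) : ℚ) * (t - 1) := by
          have := Nat.mul_choose_sub_one_eq d (t - 2)
          rw [show t - 2 + 1 = t - 1 by omega] at this
          rw [← Nat.cast_pred (by omega : 0 < t)]
          exact_mod_cast this
        rw [sum_const, card_neighborFinset_eq_degree, nsmul_eq_mul]
        field_simp
        linear_combination -hpascal

theorem stmt_10 {V : Type*} [Fintype V] [DecidableEq V] (G : SimpleGraph V)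
    [DecidableRel G.Adj] (t : ℕ) (ht : 2 ≤ t) (x : V) (hx : 0 < G.degree x)
    (hmin : ∀ v ∈ G.neighborFinset x, G.degree x ≤ G.degree v) :
    (∑ v ∈ G.neighborFinset x,
        ((1 / (t * G.degree v) : ℚ) * ((G.degree v).choose (t - 1) : ℚ) -
          (1 / (G.degree v) : ℚ) * ((G.degree v).choose (t - 1) : ℚ))) +
        ((G.degree x).choose (t - 1) : ℚ) ≤
      (1 / t) * ((G.degree x).choose (t - 1) : ℚ) :=
  stmt_10_general G t ht x hmin
end

section
/- Let G be a finite simple graph, let P = v_0, v_1, …, v_k be a longest path of G (of length k ≥ 1), suppose v_0 and v_k are nonadjacent, and suppose G contains no cycle of length k+1. Then min(d(v_0), d(v_k)) ≤ k/2. -/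
/-!
Put `A = {i | u ∼ vᵢ}` and `B = {i | v ∼ vᵢ}`. By maximality of the path every neighbour of `u` or
`v` lies on it, so `d(u) = |A|` and `d(v) = |B|`. If `j ∈ B` and `j + 1 ∈ A`, then
`v, v_j, v_{j-1}, …, u, v_{j+1}, …, v` is a cycle of length `k + 1` (or `u ∼ v` when `j + 1 = k`).
Hence `A` and `B + 1` are disjoint subsets of `{1, …, k}`, so `d(u) + d(v) ≤ k`.
-/

open SimpleGraph Finset

namespace SimpleGraph.Walk

variable {V : Type*} {G : SimpleGraph V}

lemma IsPath.cons_isCycle_of_one_lt_length {u v : V} {p : G.Walk v u} (hp : p.IsPath)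
    (h : G.Adj u v) (hl : 1 < p.length) : (cons h p).IsCycle :=
  (cons_isCycle_iff p h).2 ⟨hp, fun he => by
    have := hp.length_eq_one_of_mem_edges (Sym2.eq_swap ▸ he)
    omega⟩

lemma IsPath.mem_support_of_adj {u v x : V} {w : G.Walk u v} (hw : w.IsPath)
    (hmax : ∀ q : G.Walk x v, q.IsPath → q.length ≤ w.length) (hx : G.Adj x u) :
    x ∈ w.support := by
  by_contra hxw
  have := hmax _ (hw.cons hxw (h := hx))
  simp at this

lemma IsPath.exists_isCycle_of_crossing {u v : V} {w : G.Walk u v} (hw : w.IsPath) {j : ℕ}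
    (hj : j + 1 < w.length) (hu : G.Adj u (w.getVert (j + 1))) (hv : G.Adj v (w.getVert j)) :
    ∃ c : G.Walk v v, c.IsCycle ∧ c.length = w.length + 1 := by
  let q := (w.take j).reverse.append (cons hu (w.drop (j + 1)))
  have hlen : q.length = w.length := by
    simp only [q, length_append, length_reverse, length_cons, take_length, drop_length]
    omega
  have hget : ∀ i, q.getVert i = w.getVert (if i ≤ j then j - i else i) := by
    intro i
    simp only [q, getVert_append, length_reverse, take_length, getVert_reverse, take_getVert]
    split_ifs
    · congr 1; omega
    · omega
    · obtain rfl : i = j := by omega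
      rw [min_eq_left (by omega : i ≤ w.length), Nat.sub_self, getVert_zero, getVert_zero]
    · rw [getVert_cons _ _ (by omega), drop_getVert]
      congr 1; omega
  have hq : q.IsPath := (IsPath.getVert_injOn_iff q).1 fun a ha b hb hab => by
    simp only [Set.mem_ofPred_eq, hlen] at ha hb
    rw [hget, hget] at hab
    have := hw.getVert_injOn (by simp only [Set.mem_ofPred_eq]; split_ifs <;> omega)
      (by simp only [Set.mem_ofPred_eq]; split_ifs <;> omega) hab
    split_ifs at this <;> omega
  exact ⟨cons hv q, hq.cons_isCycle_of_one_lt_length hv (by omega), by simp [hlen]⟩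

lemma IsPath.degree_eq_card_filter_adj_getVert [Fintype V] [DecidableRel G.Adj] {u v x : V}
    {w : G.Walk u v} (hw : w.IsPath) (hx : ∀ y, G.Adj x y → y ∈ w.support) :
    G.degree x = #{i ∈ range (w.length + 1) | G.Adj x (w.getVert i)} := by
  classical
  rw [← card_neighborFinset_eq_degree, ← card_image_of_injOn (f := w.getVert)]
  · congr 1
    ext y
    simp only [mem_neighborFinset, mem_image, mem_filter, mem_range, Nat.lt_succ_iff]
    constructor
    · intro hy
      obtain ⟨i, rfl, hi⟩ := mem_support_iff_exists_getVert.1 (hx y hy)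
      exact ⟨i, ⟨hi, hy⟩, rfl⟩
    · rintro ⟨i, ⟨-, hi⟩, rfl⟩
      exact hi
  · intro a ha b hb
    simp only [coe_filter, mem_range, Nat.lt_succ_iff, Set.mem_ofPred_eq] at ha hb
    exact hw.getVert_injOn ha.1 hb.1

end SimpleGraph.Walk

lemma Finset.card_add_card_le_of_forall_add_one_notMem {A B : Finset ℕ} {k : ℕ}
    (hA : A ⊆ Ioc 0 k) (hB : B ⊆ range k) (hAB : ∀ j ∈ B, j + 1 ∉ A) : #A + #B ≤ k := by
  have hdisj : Disjoint A (B.image (· + 1)) := by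
    rw [disjoint_right]
    intro _ hi
    obtain ⟨j, hj, rfl⟩ := mem_image.1 hi
    exact hAB j hj
  have hsub : A ∪ B.image (· + 1) ⊆ Ioc 0 k := by
    refine union_subset hA fun i hi => ?_
    obtain ⟨j, hj, rfl⟩ := mem_image.1 hi
    have := mem_range.1 (hB hj)
    exact mem_Ioc.2 ⟨by omega, by omega⟩
  calc #A + #B = #(A ∪ B.image (· + 1)) := by
        rw [card_union_of_disjoint hdisj, card_image_of_injective _ (add_left_injective 1)]
    _ ≤ #(Ioc 0 k) := card_le_card hsub
    _ = k := by simp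

theorem stmt_12_general {V : Type*} [Fintype V] (G : SimpleGraph V)
    [DecidableRel G.Adj] (k : ℕ) (u v : V) (w : G.Walk u v)
    (hw : w.IsPath) (hlen : w.length = k)
    (hmax : ∀ (a b : V) (q : G.Walk a b), q.IsPath → q.length ≤ k)
    (hadj : ¬ G.Adj u v)
    (hcyc : ¬ ∃ (a : V) (c : G.Walk a a), c.IsCycle ∧ c.length = k + 1) :
    (min (G.degree u) (G.degree v) : ℚ) ≤ (k : ℚ) / 2 := by
  subst hlen
  set A := {i ∈ range (w.length + 1) | G.Adj u (w.getVert i)}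
  set B := {i ∈ range (w.length + 1) | G.Adj v (w.getVert i)}
  have hdegu : G.degree u = #A := hw.degree_eq_card_filter_adj_getVert fun x hx =>
    hw.mem_support_of_adj (hmax _ _) hx.symm
  have hdegv : G.degree v = #B := hw.degree_eq_card_filter_adj_getVert fun x hx => by
    simpa using hw.reverse.mem_support_of_adj (by simpa using hmax x u) hx.symm
  have hA : A ⊆ Ioc 0 w.length := fun i hi => by
    obtain ⟨hir, hui⟩ := mem_filter.1 hi
    have : i ≠ 0 := by rintro rfl; simp at hui
    exact mem_Ioc.2 ⟨by omega, by simpa [Nat.lt_succ_iff] using hir⟩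
  have hB : B ⊆ range w.length := fun i hi => by
    obtain ⟨hir, hvi⟩ := mem_filter.1 hi
    have : i ≠ w.length := by rintro rfl; simp at hvi
    exact mem_range.2 (by simp at hir; omega)
  have hAB : ∀ j ∈ B, j + 1 ∉ A := by
    intro j hjB hjA
    obtain ⟨-, hvj⟩ := mem_filter.1 hjB
    obtain ⟨hj, huj⟩ := mem_filter.1 hjA
    rcases (Nat.lt_succ_iff.1 (mem_range.1 hj)).lt_or_eq with hlt | heq
    · exact hcyc ⟨v, hw.exists_isCycle_of_crossing hlt huj hvj⟩
    · exact hadj (by rwa [heq, Walk.getVert_length] at huj)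
  have := card_add_card_le_of_forall_add_one_notMem hA hB hAB
  rw [le_div_iff₀ two_pos]
  exact_mod_cast (by omega : min (G.degree u) (G.degree v) * 2 ≤ w.length)

theorem stmt_12 {V : Type*} [Fintype V] [DecidableEq V] (G : SimpleGraph V)
    [DecidableRel G.Adj] (k : ℕ) (hk : 1 ≤ k) (u v : V) (w : G.Walk u v)
    (hw : w.IsPath) (hlen : w.length = k)
    (hmax : ∀ (a b : V) (q : G.Walk a b), q.IsPath → q.length ≤ k)
    (hadj : ¬ G.Adj u v)
    (hcyc : ¬ ∃ (a : V) (c : G.Walk a a), c.IsCycle ∧ c.length = k + 1) :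
    (min (G.degree u) (G.degree v) : ℚ) ≤ (k : ℚ) / 2 :=
  stmt_12_general G k u v w hw hlen hmax hadj hcyc
end

section
/- Let t ≥ 3, d ≥ 1, and k be integers with 2d ≤ k and k ≥ t−1. Then C(d, t−1) < (d / C(t,2)) · C(k−1, t−2). -/
/-!
Write `t = s + 2` and `d = n + 1`. Since `(s + 1) C(n+1, s+1) = (n + 1) C(n, s)` and
`2 C(s+2, 2) = (s + 2)(s + 1)`, the claim becomes `(s + 2) C(n, s) < 2 C(k-1, s)`.
Pairing the factors of the falling factorials gives `2^s C(n, s) ≤ C(2n, s) ≤ C(k-1, s)`,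
and `s + 2 < 2^(s+1)` for `s ≥ 1`.
-/

namespace Nat

theorem two_pow_mul_descFactorial_le (n m : ℕ) :
    2 ^ m * n.descFactorial m ≤ (2 * n).descFactorial m := by
  induction m with
  | zero => simp
  | succ m ih =>
    rw [descFactorial_succ, descFactorial_succ]
    calc 2 ^ (m + 1) * ((n - m) * n.descFactorial m)
        = (2 * (n - m)) * (2 ^ m * n.descFactorial m) := by ring
      _ ≤ (2 * n - m) * (2 * n).descFactorial m := Nat.mul_le_mul (by omega) ih

theorem two_pow_mul_choose_le (n m : ℕ) : 2 ^ m * n.choose m ≤ (2 * n).choose m := by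
  have h := two_pow_mul_descFactorial_le n m
  rw [descFactorial_eq_factorial_mul_choose, descFactorial_eq_factorial_mul_choose,
    mul_left_comm] at h
  exact Nat.le_of_mul_le_mul_left h (factorial_pos m)

theorem add_two_mul_choose_lt {n m s : ℕ} (hs : 1 ≤ s) (hn : 2 * n ≤ m) (hsm : s ≤ m) :
    (s + 2) * n.choose s < 2 * m.choose s := by
  rcases (n.choose s).eq_zero_or_pos with h0 | hpos
  · rw [h0, Nat.mul_zero]
    exact Nat.mul_pos two_pos (choose_pos hsm)
  have hpow : s + 2 < 2 * 2 ^ s := by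
    have := s.lt_two_pow_self
    omega
  calc (s + 2) * n.choose s
      < 2 * 2 ^ s * n.choose s := Nat.mul_lt_mul_of_pos_right hpow hpos
    _ = 2 * (2 ^ s * n.choose s) := Nat.mul_assoc ..
    _ ≤ 2 * (2 * n).choose s := Nat.mul_le_mul_left 2 (two_pow_mul_choose_le n s)
    _ ≤ 2 * m.choose s := Nat.mul_le_mul_left 2 (choose_le_choose s hn)

theorem choose_succ_mul_choose_two_lt {n m s : ℕ} (hs : 1 ≤ s) (hn : 2 * n ≤ m) (hsm : s ≤ m) :
    (n + 1).choose (s + 1) * (s + 2).choose 2 < (n + 1) * m.choose s := by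
  have hn' : (n + 1) * n.choose s = (n + 1).choose (s + 1) * (s + 1) := add_one_mul_choose_eq n s
  have hs' : (s + 2) * (s + 1) = (s + 2).choose 2 * 2 := by
    simpa using add_one_mul_choose_eq (s + 1) 1
  have key := Nat.mul_lt_mul_of_pos_left (add_two_mul_choose_lt hs hn hsm)
    (show 0 < (n + 1) * (s + 1) by positivity)
  refine Nat.lt_of_mul_lt_mul_right (a := 2 * (s + 1)) ?_
  calc (n + 1).choose (s + 1) * (s + 2).choose 2 * (2 * (s + 1))
      = (n + 1).choose (s + 1) * (s + 1) * ((s + 2).choose 2 * 2) := by ring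
    _ = (n + 1) * n.choose s * ((s + 2) * (s + 1)) := by rw [hn', hs']
    _ = (n + 1) * (s + 1) * ((s + 2) * n.choose s) := by ring
    _ < (n + 1) * (s + 1) * (2 * m.choose s) := key
    _ = (n + 1) * m.choose s * (2 * (s + 1)) := by ring

end Nat

theorem stmt_14 (t d k : ℕ) (ht : 3 ≤ t) (hd : 1 ≤ d) (hk : 2 * d ≤ k) (hkt : t - 1 ≤ k) :
    (d.choose (t - 1) : ℚ) < ((d : ℚ) / (t.choose 2)) * ((k - 1).choose (t - 2) : ℚ) := by
  obtain ⟨s, rfl⟩ : ∃ s, t = s + 2 := ⟨t - 2, by omega⟩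
  obtain ⟨n, rfl⟩ : ∃ n, d = n + 1 := ⟨d - 1, by omega⟩
  have key := Nat.choose_succ_mul_choose_two_lt (n := n) (m := k - 1) (s := s)
    (by omega) (by omega) (by omega)
  have hpos : (0 : ℚ) < (s + 2).choose 2 := by exact_mod_cast Nat.choose_pos (by omega)
  rw [show s + 2 - 1 = s + 1 by omega, show s + 2 - 2 = s by omega, div_mul_eq_mul_div,
    lt_div_iff₀ hpos]
  exact_mod_cast key
end
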